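/- arXiv:1502.02500 — 8 statements merged into one kernel-verified Lean document; each statement's English description precedes it below -/
import Mathlib

section
/- Define inductively on finitely supported real sequences the Terenzi norm: N(a_1) = |a_1|, and for n ≥ 2, N(a_1,…,a_n) = (1 - 1/(n+1))(|a_n| + N(a_1,…,a_{n-1})) + (1/(n+1))·max(|a_n|/n, N(a_1,…,a_{n-1})). Then for every m and every finite sequence (a_1,…,a_m), one has Σ_{n=1}^m (1 - 1/(n+1))|a_n| ≤ N(a_1,…,a_m) ≤ Σ_{n=1}^m |a_n|. -/
/-- The Terenzi norm of the truncated sequence `(a 1, …, a m)`, defined recursively. -/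
noncomputable def terenzi (a : ℕ → ℝ) : ℕ → ℝ
  | 0 => 0
  | 1 => |a 1|
  | (n+2) => (1 - 1/((n:ℝ)+3)) * (|a (n+2)| + terenzi a (n+1))
      + (1/((n:ℝ)+3)) * max (|a (n+2)| / ((n:ℝ)+2)) (terenzi a (n+1))

lemma terenzi_nonneg (a : ℕ → ℝ) : ∀ m, 0 ≤ terenzi a m := by
  intro m
  induction m using Nat.strong_induction_on with
  | _ m ih =>
    match m with
    | 0 => simp [terenzi]
    | 1 => simp [terenzi, abs_nonneg]
    | (n+2) =>
      have h1 := ih (n+1) (by omega)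
      have h2 : (0:ℝ) < 1/((n:ℝ)+3) := by positivity
      have h3 : 1/((n:ℝ)+3) ≤ 1 := by
        rw [div_le_one (by positivity)]; linarith
      have := abs_nonneg (a (n+2))
      have hmax : (0:ℝ) ≤ max (|a (n+2)| / ((n:ℝ)+2)) (terenzi a (n+1)) :=
        le_max_of_le_right h1
      show (0:ℝ) ≤ _
      rw [terenzi]
      nlinarith

theorem terenzi_lower_upper (a : ℕ → ℝ) (m : ℕ) :
    (∑ n ∈ Finset.Icc 1 m, (1 - 1/((n:ℝ)+1)) * |a n|) ≤ terenzi a m ∧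
      terenzi a m ≤ ∑ n ∈ Finset.Icc 1 m, |a n| := by
  induction m using Nat.strong_induction_on with
  | _ m ih =>
    match m with
    | 0 => simp [terenzi]
    | 1 => simp only [terenzi]; constructor <;> [skip; simp] <;> · simp; nlinarith [abs_nonneg (a 1)]
    | (n+2) =>
      obtain ⟨ihl, ihr⟩ := ih (n+1) (by omega)
      have hN := terenzi_nonneg a (n+1)
      have habs := abs_nonneg (a (n+2))
      have h2 : (0:ℝ) < 1/((n:ℝ)+3) := by positivity
      have h3 : 1/((n:ℝ)+3) ≤ 1 := by
        rw [div_le_one (by positivity)]; linarith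
      have hdiv : |a (n+2)| / ((n:ℝ)+2) ≤ |a (n+2)| := by
        rw [div_le_iff₀ (by positivity)]; nlinarith
      have hmax_le : max (|a (n+2)| / ((n:ℝ)+2)) (terenzi a (n+1))
          ≤ |a (n+2)| + terenzi a (n+1) :=
        max_le (by linarith) (by linarith)
      have hmax_ge : terenzi a (n+1)
          ≤ max (|a (n+2)| / ((n:ℝ)+2)) (terenzi a (n+1)) := le_max_right _ _
      have hsum1 : (∑ k ∈ Finset.Icc 1 (n+2), (1 - 1/((k:ℝ)+1)) * |a k|)
          = (∑ k ∈ Finset.Icc 1 (n+1), (1 - 1/((k:ℝ)+1)) * |a k|)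
            + (1 - 1/((n:ℝ)+3)) * |a (n+2)| := by
        rw [Finset.sum_Icc_succ_top (by omega)]
        push_cast
        norm_num
        exact Or.inl (by ring)
      have hsum2 : (∑ k ∈ Finset.Icc 1 (n+2), |a k|)
          = (∑ k ∈ Finset.Icc 1 (n+1), |a k|) + |a (n+2)| := by
        rw [Finset.sum_Icc_succ_top (by omega)]
      constructor
      · rw [hsum1, terenzi]
        nlinarith
      · rw [hsum2, terenzi]
        nlinarith
end

section
/- With N the Terenzi norm defined by N(a_1)=|a_1| and N(a_1,…,a_n) = (1-1/(n+1))(|a_n| + N(a_1,…,a_{n-1})) + (1/(n+1))·max(|a_n|/n, N(a_1,…,a_{n-1})) for n ≥ 2: in particular (1/2)·Σ_{n=1}^m |a_n| ≤ N(a_1,…,a_m) ≤ Σ_{n=1}^m |a_n|, so N is equivalent to the ℓ¹ norm with constant 2. -/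
theorem terenzi_equiv_l1 (a : ℕ → ℝ) (m : ℕ) :
    (1/2) * (∑ n ∈ Finset.Icc 1 m, |a n|) ≤ terenzi a m ∧
      terenzi a m ≤ ∑ n ∈ Finset.Icc 1 m, |a n| := by
  induction m with
  | zero => simp [terenzi]
  | succ k ih =>
    match k, ih with
    | 0, _ =>
      simp only [terenzi, Finset.Icc_self, Finset.sum_singleton]
      constructor
      · nlinarith [abs_nonneg (a 1)]
      · exact le_rfl
    | n+1, ih =>
      obtain ⟨h1, h2⟩ := ih
      have hs : ∑ i ∈ Finset.Icc 1 (n+2), |a i|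
          = (∑ i ∈ Finset.Icc 1 (n+1), |a i|) + |a (n+2)| :=
        Finset.sum_Icc_succ_top (by omega) _
      have hsum0 : 0 ≤ ∑ i ∈ Finset.Icc 1 (n+1), |a i| :=
        Finset.sum_nonneg fun i _ => abs_nonneg _
      have hT0 : 0 ≤ terenzi a (n+1) := by linarith
      have ha : 0 ≤ |a (n+2)| := abs_nonneg _
      have hn : (0:ℝ) ≤ (n:ℝ) := Nat.cast_nonneg n
      have heps : (0:ℝ) < 1/((n:ℝ)+3) := by positivity
      have heps2 : 1/((n:ℝ)+3) ≤ 1/2 := by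
        rw [div_le_div_iff₀ (by linarith) (by norm_num)]; linarith
      have hmax1 : max (|a (n+2)| / ((n:ℝ)+2)) (terenzi a (n+1))
          ≤ |a (n+2)| + terenzi a (n+1) := by
        apply max_le
        · have : |a (n+2)| / ((n:ℝ)+2) ≤ |a (n+2)| :=
            div_le_self ha (by linarith)
          linarith
        · linarith
      have hmax2 : terenzi a (n+1)
          ≤ max (|a (n+2)| / ((n:ℝ)+2)) (terenzi a (n+1)) := le_max_right _ _
      have hunfold : terenzi a (n+2)
          = (1 - 1/((n:ℝ)+3)) * (|a (n+2)| + terenzi a (n+1))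
            + (1/((n:ℝ)+3)) * max (|a (n+2)| / ((n:ℝ)+2)) (terenzi a (n+1)) := rfl
      rw [hs, hunfold]
      constructor
      · nlinarith [mul_le_mul_of_nonneg_left hmax2 heps.le,
          mul_le_mul_of_nonneg_right heps2 ha]
      · nlinarith [mul_nonneg heps.le (sub_nonneg.2 hmax1)]
end

section
/- Let N be the Terenzi norm defined recursively by N(a_1)=|a_1| and N(a_1,…,a_n) = (1-1/(n+1))(|a_n| + N(a_1,…,a_{n-1})) + (1/(n+1))·max(|a_n|/n, N(a_1,…,a_{n-1})). If Σ_{n=1}^m |a_n| > 0, then the strict inequality N(a_1,…,a_m) > Σ_{n=1}^m (1 - 1/(n+1))|a_n| holds. -/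
lemma terenzi_zero (a : ℕ → ℝ) :
    ∀ m, (∀ k ∈ Finset.Icc 1 m, a k = 0) → terenzi a m = 0
  | 0, _ => rfl
  | 1, h => by simp [terenzi, h 1 (by simp)]
  | (n+2), h => by
      have h1 : a (n+2) = 0 := h _ (by simp)
      have h2 := terenzi_zero a (n+1) (fun k hk => h k (by simp at hk ⊢; omega))
      simp [terenzi, h1, h2]

lemma terenzi_aux (a : ℕ → ℝ) :
    ∀ m, 0 < (∑ n ∈ Finset.Icc 1 m, |a n|) →
    (∑ n ∈ Finset.Icc 1 m, (1 - 1/((n:ℝ)+1)) * |a n|) < terenzi a m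
  | 0, h => by simp at h
  | 1, h => by
      simp only [Finset.Icc_self, Finset.sum_singleton] at h ⊢
      have : (0:ℝ) < |a 1| := h
      simp only [terenzi]
      norm_num
      linarith
  | (n+2), h => by
      have hsplit : ∀ f : ℕ → ℝ, (∑ k ∈ Finset.Icc 1 (n+2), f k)
          = (∑ k ∈ Finset.Icc 1 (n+1), f k) + f (n+2) := fun f =>
        Finset.sum_Icc_succ_top (by omega) f
      rw [hsplit] at h ⊢
      have hε : (0:ℝ) < 1/((n:ℝ)+3) := by positivity
      have hε1 : 1/((n:ℝ)+3) < 1 := by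
        rw [div_lt_one (by positivity)]; linarith
      push_cast
      have h23 : ((n:ℝ)+2+1) = ((n:ℝ)+3) := by ring
      rw [h23]
      rcases lt_or_eq_of_le (Finset.sum_nonneg (fun k _ => abs_nonneg (a k)) :
          (0:ℝ) ≤ ∑ k ∈ Finset.Icc 1 (n+1), |a k|) with hpos | hzero
      · -- inductive case
        have ih := terenzi_aux a (n+1) hpos
        have hmax : terenzi a (n+1) ≤ max (|a (n+2)| / ((n:ℝ)+2)) (terenzi a (n+1)) :=
          le_max_right _ _
        simp only [terenzi]
        nlinarith [mul_le_mul_of_nonneg_left hmax hε.le, abs_nonneg (a (n+2))]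
      · -- all earlier terms are zero
        have hall : ∀ k ∈ Finset.Icc 1 (n+1), |a k| = 0 := by
          intro k hk
          have := (Finset.sum_eq_zero_iff_of_nonneg
            (fun k _ => abs_nonneg (a k))).mp hzero.symm
          exact this k hk
        have hT : terenzi a (n+1) = 0 :=
          terenzi_zero a (n+1) (fun k hk => abs_eq_zero.mp (hall k hk))
        have hS : (∑ k ∈ Finset.Icc 1 (n+1), (1 - 1/((k:ℝ)+1)) * |a k|) = 0 :=
          Finset.sum_eq_zero (fun k hk => by rw [hall k hk, mul_zero])
        have ha : 0 < |a (n+2)| := by rw [← hzero] at h; simpa using h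
        rw [hS]
        simp only [terenzi, hT]
        have hmax : max (|a (n+2)| / ((n:ℝ)+2)) 0 = |a (n+2)| / ((n:ℝ)+2) :=
          max_eq_left (by positivity)
        rw [hmax]
        have : 0 < (1/((n:ℝ)+3)) * (|a (n+2)| / ((n:ℝ)+2)) := by positivity
        linarith

theorem terenzi_strict_lower (a : ℕ → ℝ) (m : ℕ)
    (h : 0 < ∑ n ∈ Finset.Icc 1 m, |a n|) :
    (∑ n ∈ Finset.Icc 1 m, (1 - 1/((n:ℝ)+1)) * |a n|) < terenzi a m := by
  exact terenzi_aux a m h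
end

section
/- Let N be the Terenzi norm defined recursively as above. For every m ≥ 1 and every tuple (a_1,…,a_m) with Σ|a_n| > 0, there exist coefficients d_1,…,d_m ∈ (0,1] such that N(a_1,…,a_m) = Σ_{n=1}^m d_n |a_n|. -/
theorem terenzi_representation (a : ℕ → ℝ) (m : ℕ) (hm : 1 ≤ m)
    (h : 0 < ∑ n ∈ Finset.Icc 1 m, |a n|) :
    ∃ d : ℕ → ℝ, (∀ n ∈ Finset.Icc 1 m, 0 < d n ∧ d n ≤ 1) ∧
      terenzi a m = ∑ n ∈ Finset.Icc 1 m, d n * |a n| := by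
  clear h
  induction m, hm using Nat.le_induction with
  | base =>
      refine ⟨fun _ => 1, fun n _ => by norm_num, by simp [terenzi]⟩
  | succ m hm ih =>
      obtain ⟨d, hd, hT⟩ := ih
      obtain ⟨k, rfl⟩ : ∃ k, m = k + 1 := ⟨m - 1, (Nat.succ_pred_eq_of_pos hm).symm⟩
      have hk0 : (0:ℝ) ≤ (k:ℝ) := Nat.cast_nonneg k
      have hk3 : (0:ℝ) < (k:ℝ) + 3 := by positivity
      have hk2 : (0:ℝ) < (k:ℝ) + 2 := by positivity
      have he1 : 1/((k:ℝ)+3) < 1 := by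
        rw [div_lt_one hk3]; linarith
      have he0 : (0:ℝ) < 1/((k:ℝ)+3) := by positivity
      rcases le_total (|a (k+2)| / ((k:ℝ)+2)) (terenzi a (k+1)) with hle | hle
      · refine ⟨fun n => if n = k+2 then 1 - 1/((k:ℝ)+3) else d n, ?_, ?_⟩
        · intro n hn
          by_cases hcase : n = k+2
          · subst hcase
            beta_reduce
            rw [if_pos rfl]
            constructor <;> linarith
          · simp only [if_neg hcase]
            exact hd n (by simp only [Finset.mem_Icc] at hn ⊢; omega)
        · rw [Finset.sum_Icc_succ_top (by omega)]
          beta_reduce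
          simp only [show k+1+1 = k+2 from rfl, if_true]
          rw [Finset.sum_congr rfl (fun n hn => by
            simp only [Finset.mem_Icc] at hn
            rw [if_neg (by omega)])]
          show terenzi a (k+2) = _
          rw [terenzi, max_eq_right hle, ← hT]
          ring
      · have hc2 : 1/(((k:ℝ)+3)*((k:ℝ)+2)) ≤ 1/((k:ℝ)+3) := by
          apply one_div_le_one_div_of_le hk3
          nlinarith
        have hc0 : (0:ℝ) < 1/(((k:ℝ)+3)*((k:ℝ)+2)) := by positivity
        refine ⟨fun n => if n = k+2 then 1 - 1/((k:ℝ)+3) + 1/(((k:ℝ)+3)*((k:ℝ)+2))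
          else (1 - 1/((k:ℝ)+3)) * d n, ?_, ?_⟩
        · intro n hn
          by_cases hcase : n = k+2
          · subst hcase
            beta_reduce
            rw [if_pos rfl]
            constructor <;> linarith
          · simp only [if_neg hcase]
            obtain ⟨hd1, hd2⟩ := hd n (by simp only [Finset.mem_Icc] at hn ⊢; omega)
            constructor
            · exact mul_pos (by linarith) hd1
            · nlinarith
        · rw [Finset.sum_Icc_succ_top (by omega)]
          beta_reduce
          simp only [show k+1+1 = k+2 from rfl, if_true]
          rw [Finset.sum_congr rfl (fun n hn => by
            simp only [Finset.mem_Icc] at hn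
            rw [if_neg (by omega)])]
          have : ∑ n ∈ Finset.Icc 1 (k+1), (1 - 1/((k:ℝ)+3)) * d n * |a n|
              = (1 - 1/((k:ℝ)+3)) * terenzi a (k+1) := by
            rw [hT, Finset.mul_sum]
            exact Finset.sum_congr rfl fun n _ => by ring
          rw [this]
          show terenzi a (k+2) = _
          rw [terenzi, max_eq_left hle]
          field_simp
          ring
end

section
/- Let N be the Terenzi norm defined recursively as above. Then for all m and all real tuples, N(a_1,…,a_m, a_{m+1}) ≥ N(a_1,…,a_m) + (1 − 1/(m+2))|a_{m+1}|, with equality if and only if |a_{m+1}|/(m+1) ≤ N(a_1,…,a_m). -/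
theorem terenzi_succ_lower (a : ℕ → ℝ) (m : ℕ) :
    terenzi a m + (1 - 1/((m:ℝ)+2)) * |a (m+1)| ≤ terenzi a (m+1) ∧
      (terenzi a (m+1) = terenzi a m + (1 - 1/((m:ℝ)+2)) * |a (m+1)| ↔
        |a (m+1)| / ((m:ℝ)+1) ≤ terenzi a m) := by
  cases m with
  | zero =>
    have h := abs_nonneg (a 1)
    simp only [terenzi, Nat.cast_zero]
    norm_num
    constructor
    · linarith
    · constructor
      · intro h1; linarith [neg_abs_le (a 1), le_abs_self (a 1)]
      · intro h1
        have h2 : |a 1| = 0 := by rw [h1]; simp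
        linarith
  | succ n =>
    set x := |a (n+2)| with hx
    set T := terenzi a (n+1) with hT
    have hn3 : (0:ℝ) < (n:ℝ)+3 := by positivity
    have key : terenzi a (n+2)
        = T + (1 - 1/((n:ℝ)+3)) * x
          + (1/((n:ℝ)+3)) * (max (x/((n:ℝ)+2)) T - T) := by
      show (1 - 1/((n:ℝ)+3)) * (x + T) + (1/((n:ℝ)+3)) * max (x/((n:ℝ)+2)) T = _
      ring
    have hmax : T ≤ max (x/((n:ℝ)+2)) T := le_max_right _ _
    have hcast2 : ((n+1:ℕ):ℝ) + 2 = (n:ℝ) + 3 := by push_cast; ring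
    have hcast1 : ((n+1:ℕ):ℝ) + 1 = (n:ℝ) + 2 := by push_cast; ring
    rw [show (n+1)+1 = n+2 from rfl, hcast2, hcast1, key]
    have hpos : (0:ℝ) < 1/((n:ℝ)+3) := by positivity
    constructor
    · nlinarith [mul_nonneg hpos.le (sub_nonneg.mpr hmax)]
    · constructor
      · intro h
        have h2 : (1/((n:ℝ)+3)) * (max (x/((n:ℝ)+2)) T - T) = 0 := by linarith
        have h3 : max (x/((n:ℝ)+2)) T = T := by
          have := mul_eq_zero.mp h2
          rcases this with h4 | h4
          · exact absurd h4 (ne_of_gt hpos)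
          · linarith
        exact max_le_iff.mp h3.le |>.1
      · intro h
        have h3 : max (x/((n:ℝ)+2)) T = T := max_eq_right h
        rw [h3]
        ring
end

section
/- The closed unit ball of ℓ¹ equipped with the Terenzi norm N is closed under coordinatewise limits of bounded sequences: if (x_m) ⊆ ℓ¹ with N(x_m) ≤ 1 for all m, x ∈ ℓ¹, and x_m(n) → x(n) for every coordinate n, then N(x) ≤ 1. -/
lemma terenzi_mono (a : ℕ → ℝ) : Monotone (terenzi a) := by
  apply monotone_nat_of_le_succ
  intro n
  match n with
  | 0 => simp [terenzi, abs_nonneg]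
  | Nat.succ n =>
    show terenzi a (n+1) ≤ terenzi a (n+2)
    rw [show terenzi a (n+2) = (1 - 1/((n:ℝ)+3)) * (|a (n+2)| + terenzi a (n+1))
      + (1/((n:ℝ)+3)) * max (|a (n+2)| / ((n:ℝ)+2)) (terenzi a (n+1)) from rfl]
    have hc0 : (0:ℝ) < 1/((n:ℝ)+3) := by positivity
    have hc1 : 1/((n:ℝ)+3) < 1 := by
      rw [div_lt_one (by positivity)]; linarith [Nat.cast_nonneg (α := ℝ) n]
    have hmax : terenzi a (n+1) ≤ max (|a (n+2)| / ((n:ℝ)+2)) (terenzi a (n+1)) :=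
      le_max_right _ _
    nlinarith [abs_nonneg (a (n+2))]

lemma terenzi_tendsto (x : ℕ → ℕ → ℝ) (y : ℕ → ℝ)
    (hconv : ∀ n, Filter.Tendsto (fun m => x m n) Filter.atTop (nhds (y n))) :
    ∀ n, Filter.Tendsto (fun m => terenzi (x m) n) Filter.atTop (nhds (terenzi y n))
  | 0 => by simpa [terenzi] using (tendsto_const_nhds : Filter.Tendsto (fun _ : ℕ => (0:ℝ)) _ _)
  | 1 => by simpa [terenzi] using (hconv 1).abs
  | (n+2) => by
    have ih := terenzi_tendsto x y hconv (n+1)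
    have h2 := (hconv (n+2)).abs
    simp only [terenzi]
    exact (tendsto_const_nhds.mul (h2.add ih)).add
      (tendsto_const_nhds.mul ((h2.div_const _).max ih))

theorem terenzi_ball_pointwise_closed
    (x : ℕ → ℕ → ℝ) (N : ℕ → ℝ)
    (hxsum : ∀ m, Summable (fun n => |x m n|))
    (hN : ∀ m, Filter.Tendsto (terenzi (x m)) Filter.atTop (nhds (N m)))
    (hN1 : ∀ m, N m ≤ 1)
    (y : ℕ → ℝ) (hysum : Summable (fun n => |y n|))
    (hconv : ∀ n, Filter.Tendsto (fun m => x m n) Filter.atTop (nhds (y n)))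
    (Ly : ℝ) (hLy : Filter.Tendsto (terenzi y) Filter.atTop (nhds Ly)) :
    Ly ≤ 1 := by
  have key : ∀ n, terenzi y n ≤ 1 := by
    intro n
    have := terenzi_tendsto x y hconv n
    refine le_of_tendsto this (Filter.Eventually.of_forall fun m => ?_)
    exact le_trans ((terenzi_mono (x m)).ge_of_tendsto (hN m) n) (hN1 m)
  exact le_of_tendsto hLy (Filter.Eventually.of_forall key)
end

section
/- The space Z = (Σ_{n=1}^∞ ⊕ ℓ_p^n)_{ℓ¹} for p > 2 (the ℓ¹-direct sum of the finite-dimensional spaces ℓ_p^n) is not isomorphic to any subspace of ℓ¹. -/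
open Finset

variable {ι : Type*} [DecidableEq ι]

/-- signed sum -/
def sgnSum (a : ι → ℝ) (t s : Finset ι) : ℝ := ∑ i ∈ t, (if i ∈ s then a i else -a i)

lemma sgnSum_insert (a : ι → ℝ) {t : Finset ι} {j : ι} (hj : j ∉ t) (s : Finset ι)
    (hs : s ⊆ t) :
    sgnSum a (insert j t) s = -a j + sgnSum a t s ∧
      sgnSum a (insert j t) (insert j s) = a j + sgnSum a t s := by
  have hjs : j ∉ s := fun h => hj (hs h)
  constructor
  · rw [sgnSum, Finset.sum_insert hj, if_neg hjs]
    rfl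
  · rw [sgnSum, Finset.sum_insert hj, if_pos (mem_insert_self j s)]
    congr 1
    refine Finset.sum_congr rfl fun i hi => ?_
    have : i ≠ j := fun h => hj (h ▸ hi)
    simp [Finset.mem_insert, this]

theorem sgn_sum_sq (a : ι → ℝ) (t : Finset ι) :
    ∑ s ∈ t.powerset, (sgnSum a t s) ^ 2 = 2 ^ t.card * ∑ i ∈ t, a i ^ 2 := by
  induction t using Finset.induction_on with
  | empty => simp [sgnSum]
  | @insert j t hj ih =>
    rw [Finset.sum_powerset_insert hj]
    have h1 : ∀ s ∈ t.powerset, (sgnSum a (insert j t) s) ^ 2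
        = (-a j + sgnSum a t s) ^ 2 := fun s hs => by
      rw [(sgnSum_insert a hj s (Finset.mem_powerset.mp hs)).1]
    have h2 : ∀ s ∈ t.powerset, (sgnSum a (insert j t) (insert j s)) ^ 2
        = (a j + sgnSum a t s) ^ 2 := fun s hs => by
      rw [(sgnSum_insert a hj s (Finset.mem_powerset.mp hs)).2]
    rw [Finset.sum_congr rfl h1, Finset.sum_congr rfl h2]
    have expand : ∀ s ∈ t.powerset, (-a j + sgnSum a t s) ^ 2 + (a j + sgnSum a t s) ^ 2
        = 2 * (sgnSum a t s) ^ 2 + 2 * a j ^ 2 := fun s _ => by ring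
    rw [← Finset.sum_add_distrib, Finset.sum_congr rfl expand, Finset.sum_add_distrib,
      ← Finset.mul_sum, ih, Finset.sum_const, Finset.card_powerset, Finset.card_insert_of_notMem hj,
      Finset.sum_insert hj]
    push_cast
    ring

theorem sgn_sum_pow4 (a : ι → ℝ) (t : Finset ι) :
    ∑ s ∈ t.powerset, (sgnSum a t s) ^ 4 ≤ 3 * 2 ^ t.card * (∑ i ∈ t, a i ^ 2) ^ 2 := by
  induction t using Finset.induction_on with
  | empty => simp [sgnSum]
  | @insert j t hj ih =>
    rw [Finset.sum_powerset_insert hj]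
    have h1 : ∀ s ∈ t.powerset, (sgnSum a (insert j t) s) ^ 4
        = (-a j + sgnSum a t s) ^ 4 := fun s hs => by
      rw [(sgnSum_insert a hj s (Finset.mem_powerset.mp hs)).1]
    have h2 : ∀ s ∈ t.powerset, (sgnSum a (insert j t) (insert j s)) ^ 4
        = (a j + sgnSum a t s) ^ 4 := fun s hs => by
      rw [(sgnSum_insert a hj s (Finset.mem_powerset.mp hs)).2]
    rw [Finset.sum_congr rfl h1, Finset.sum_congr rfl h2, ← Finset.sum_add_distrib]
    have expand : ∀ s ∈ t.powerset, (-a j + sgnSum a t s) ^ 4 + (a j + sgnSum a t s) ^ 4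
        = 2 * (sgnSum a t s) ^ 4 + 12 * a j ^ 2 * (sgnSum a t s) ^ 2 + 2 * a j ^ 4 :=
      fun s _ => by ring
    rw [Finset.sum_congr rfl expand]
    have : ∑ s ∈ t.powerset, (2 * (sgnSum a t s) ^ 4 + 12 * a j ^ 2 * (sgnSum a t s) ^ 2
        + 2 * a j ^ 4)
        = 2 * (∑ s ∈ t.powerset, (sgnSum a t s) ^ 4)
          + 12 * a j ^ 2 * (2 ^ t.card * ∑ i ∈ t, a i ^ 2) + 2 ^ t.card * (2 * a j ^ 4) := by
      rw [Finset.sum_add_distrib, Finset.sum_add_distrib, ← Finset.mul_sum, ← Finset.mul_sum,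
        sgn_sum_sq, Finset.sum_const, Finset.card_powerset]
      push_cast; ring
    rw [this, Finset.card_insert_of_notMem hj, Finset.sum_insert hj]
    have hQ : (0:ℝ) ≤ ∑ i ∈ t, a i ^ 2 := Finset.sum_nonneg fun i _ => sq_nonneg _
    have hps : (2:ℝ) ^ (t.card + 1) = 2 * 2 ^ t.card := by rw [pow_succ]; ring
    nlinarith [ih, hps, pow_pos (show (0:ℝ) < 2 by norm_num) t.card,
      mul_nonneg (mul_nonneg (sq_nonneg (a j ^ 2)) (pow_pos (show (0:ℝ) < 2 by norm_num) t.card).le) hQ,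
      mul_nonneg (sq_nonneg (a j ^ 2)) (pow_pos (show (0:ℝ) < 2 by norm_num) t.card).le,
      mul_nonneg (mul_nonneg (sq_nonneg (a j)) (pow_pos (show (0:ℝ) < 2 by norm_num) t.card).le) hQ]

theorem khintchine_lower (a : ι → ℝ) (t : Finset ι) :
    2 ^ t.card * Real.sqrt ((∑ i ∈ t, a i ^ 2) / 3) ≤ ∑ s ∈ t.powerset, |sgnSum a t s| := by
  set Q := ∑ i ∈ t, a i ^ 2 with hQdef
  have hQ : 0 ≤ Q := Finset.sum_nonneg fun i _ => sq_nonneg _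
  set N := (2:ℝ) ^ t.card with hN
  have hNpos : 0 < N := pow_pos (by norm_num) _
  set A := ∑ s ∈ t.powerset, |sgnSum a t s| with hA
  have hApos : 0 ≤ A := Finset.sum_nonneg fun s _ => abs_nonneg _
  set B := ∑ s ∈ t.powerset, (sgnSum a t s) ^ 2 with hB
  set C := ∑ s ∈ t.powerset, |sgnSum a t s| ^ 3 with hC
  set D := ∑ s ∈ t.powerset, (sgnSum a t s) ^ 4 with hD
  have hBval : B = N * Q := sgn_sum_sq a t
  have hDval : D ≤ 3 * N * Q ^ 2 := sgn_sum_pow4 a t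
  have hCpos : 0 ≤ C := Finset.sum_nonneg fun s _ => pow_nonneg (abs_nonneg _) _
  have hDpos : 0 ≤ D := Finset.sum_nonneg fun s _ => by positivity
  -- B^2 ≤ A * C
  have hB2 : B ^ 2 ≤ A * C := by
    have := Finset.sum_mul_sq_le_sq_mul_sq t.powerset
      (fun s => Real.sqrt |sgnSum a t s|) (fun s => Real.sqrt (|sgnSum a t s| ^ 3))
    have e1 : ∀ s ∈ t.powerset,
        Real.sqrt |sgnSum a t s| * Real.sqrt (|sgnSum a t s| ^ 3) = (sgnSum a t s) ^ 2 := by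
      intro s _
      rw [← Real.sqrt_mul (abs_nonneg _)]
      have : |sgnSum a t s| * |sgnSum a t s| ^ 3 = ((sgnSum a t s) ^ 2) ^ 2 := by
        rw [show |sgnSum a t s| * |sgnSum a t s| ^ 3 = |sgnSum a t s| ^ 4 by ring, pow_abs,
          abs_of_nonneg (by positivity : (0:ℝ) ≤ sgnSum a t s ^ 4)]
        ring
      rw [this, Real.sqrt_sq (sq_nonneg _)]
    have e2 : ∀ s ∈ t.powerset, Real.sqrt |sgnSum a t s| ^ 2 = |sgnSum a t s| :=
      fun s _ => Real.sq_sqrt (abs_nonneg _)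
    have e3 : ∀ s ∈ t.powerset, Real.sqrt (|sgnSum a t s| ^ 3) ^ 2 = |sgnSum a t s| ^ 3 :=
      fun s _ => Real.sq_sqrt (by positivity)
    rw [Finset.sum_congr rfl e1, Finset.sum_congr rfl e2, Finset.sum_congr rfl e3] at this
    exact this
  -- C^2 ≤ B * D
  have hC2 : C ^ 2 ≤ B * D := by
    have := Finset.sum_mul_sq_le_sq_mul_sq t.powerset
      (fun s => |sgnSum a t s|) (fun s => (sgnSum a t s) ^ 2)
    have e1 : ∀ s ∈ t.powerset, |sgnSum a t s| * (sgnSum a t s) ^ 2 = |sgnSum a t s| ^ 3 := by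
      intro s _
      rw [show |sgnSum a t s| ^ 3 = |sgnSum a t s| * |sgnSum a t s| ^ 2 by ring, sq_abs]
    have e2 : ∀ s ∈ t.powerset, |sgnSum a t s| ^ 2 = (sgnSum a t s) ^ 2 :=
      fun s _ => sq_abs _
    have e3 : ∀ s ∈ t.powerset, ((sgnSum a t s) ^ 2) ^ 2 = (sgnSum a t s) ^ 4 :=
      fun s _ => by ring
    rw [Finset.sum_congr rfl e1, Finset.sum_congr rfl e2, Finset.sum_congr rfl e3] at this
    exact this
  -- combine: B^4 ≤ A^2 * B * D, so B^3 ≤ A^2 * D (if B > 0)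
  have key : N ^ 2 * Q ≤ 3 * A ^ 2 := by
    rcases eq_or_lt_of_le hQ with h0 | hQpos
    · rw [← h0, mul_zero]; positivity
    · have hBpos : 0 < B := by rw [hBval]; exact mul_pos hNpos hQpos
      have h4 : B ^ 4 ≤ A ^ 2 * (B * D) := by
        calc B ^ 4 = (B ^ 2) ^ 2 := by ring
          _ ≤ (A * C) ^ 2 := pow_le_pow_left₀ (sq_nonneg _) hB2 2
          _ ≤ A ^ 2 * (B * D) := by
              rw [mul_pow]
              exact mul_le_mul_of_nonneg_left hC2 (sq_nonneg _)
      have h3 : B ^ 3 ≤ A ^ 2 * D := by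
        have := h4
        rw [show A ^ 2 * (B * D) = (A ^ 2 * D) * B by ring, show (B:ℝ) ^ 4 = B ^ 3 * B by ring]
          at this
        exact le_of_mul_le_mul_right this hBpos
      have h5 : B ^ 3 ≤ A ^ 2 * (3 * N * Q ^ 2) :=
        h3.trans (mul_le_mul_of_nonneg_left hDval (sq_nonneg _))
      rw [hBval] at h5
      have hQ2 : 0 < N * Q ^ 2 := by positivity
      have : N ^ 2 * Q * (N * Q ^ 2) ≤ 3 * A ^ 2 * (N * Q ^ 2) := by nlinarith
      exact le_of_mul_le_mul_right this hQ2
  -- conclude via sqrt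
  have : N * Real.sqrt (Q / 3) = Real.sqrt (N ^ 2 * Q / 3) := by
    rw [show N ^ 2 * Q / 3 = N ^ 2 * (Q / 3) by ring, Real.sqrt_mul (sq_nonneg _),
      Real.sqrt_sq hNpos.le]
  rw [this]
  have hA2 : N ^ 2 * Q / 3 ≤ A ^ 2 := by linarith
  calc Real.sqrt (N ^ 2 * Q / 3) ≤ Real.sqrt (A ^ 2) := Real.sqrt_le_sqrt hA2
    _ = A := Real.sqrt_sq hApos
open Finset
open scoped ENNReal

local notation "L1" => lp (fun _ : ℕ => ℝ) 1

lemma L1.norm_hasSum (y : L1) : HasSum (fun k => |y k|) ‖y‖ := by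
  have := lp.hasSum_norm (p := 1) (by norm_num) y
  simpa using this

lemma L1.norm_eq_tsum (y : L1) : ‖y‖ = ∑' k, |y k| := (L1.norm_hasSum y).tsum_eq.symm

lemma L1.summable_abs (y : L1) : Summable (fun k => |y k|) := (L1.norm_hasSum y).summable

lemma sqrt_sum_sq_le {n : ℕ} (a : Fin n → ℝ) :
    Real.sqrt (∑ i, a i ^ 2) ≤ ∑ i, |a i| := by
  rw [show (∑ i, a i ^ 2) = ∑ i, |a i| ^ 2 by simp [sq_abs]]
  calc Real.sqrt (∑ i, |a i| ^ 2) ≤ Real.sqrt ((∑ i, |a i|) ^ 2) :=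
        Real.sqrt_le_sqrt (Finset.sum_sq_le_sq_sum_of_nonneg fun i _ => abs_nonneg _)
    _ = ∑ i, |a i| := Real.sqrt_sq (Finset.sum_nonneg fun i _ => abs_nonneg _)

lemma summable_sqrt_sum_sq {n : ℕ} (x : Fin n → L1) :
    Summable (fun k => Real.sqrt (∑ i, (x i k) ^ 2)) := by
  refine Summable.of_nonneg_of_le (fun k => Real.sqrt_nonneg _)
    (fun k => sqrt_sum_sq_le (fun i => x i k))
    (summable_sum fun i _ => L1.summable_abs (x i))

/-- Minkowski-type inequality. -/
lemma minkowski_l1 {n : ℕ} (x : Fin n → L1) :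
    Real.sqrt (∑ i, ‖x i‖ ^ 2) ≤ ∑' k, Real.sqrt (∑ i, (x i k) ^ 2) := by
  classical
  set v : ℕ → EuclideanSpace ℝ (Fin n) := fun k => WithLp.toLp 2 (fun i => |x i k|) with hv
  have hnorm : ∀ k, ‖v k‖ = Real.sqrt (∑ i, (x i k) ^ 2) := by
    intro k
    rw [EuclideanSpace.norm_eq]
    congr 1
    refine Finset.sum_congr rfl fun i _ => ?_
    rw [Real.norm_eq_abs]; simp [hv, sq_abs]
  set w : EuclideanSpace ℝ (Fin n) := WithLp.toLp 2 (fun i => ‖x i‖) with hw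
  have hsum : HasSum v w := by
    let e := PiLp.continuousLinearEquiv 2 ℝ (fun _ : Fin n => ℝ)
    have : HasSum (fun k => e (v k)) (e w) := by
      rw [Pi.hasSum]
      intro i
      exact L1.norm_hasSum (x i)
    simpa only [ContinuousLinearEquiv.symm_apply_apply] using e.symm.hasSum.mpr this
  have hsummable : Summable (fun k => ‖v k‖) := by
    simp_rw [hnorm]; exact summable_sqrt_sum_sq x
  have h1 : ‖w‖ ≤ ∑' k, ‖v k‖ := by
    rw [← hsum.tsum_eq]
    exact norm_tsum_le_tsum_norm hsummable
  have h2 : ‖w‖ = Real.sqrt (∑ i, ‖x i‖ ^ 2) := by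
    rw [EuclideanSpace.norm_eq]
    congr 1
    refine Finset.sum_congr rfl fun i _ => ?_
    rw [Real.norm_eq_abs]; simp [hw]
  rw [← h2]
  calc ‖w‖ ≤ ∑' k, ‖v k‖ := h1
    _ = ∑' k, Real.sqrt (∑ i, (x i k) ^ 2) := by simp_rw [hnorm]

/-- cotype-2 lower bound in ℓ¹. -/
theorem l1_cotype {n : ℕ} (x : Fin n → L1) :
    2 ^ n * Real.sqrt ((∑ i, ‖x i‖ ^ 2) / 3) ≤
      ∑ s ∈ (univ : Finset (Fin n)).powerset, ‖∑ i, (if i ∈ s then x i else -x i)‖ := by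
  classical
  set y : Finset (Fin n) → L1 := fun s => ∑ i, (if i ∈ s then x i else -x i) with hy
  have hcoord : ∀ s k, (y s) k = sgnSum (fun i => x i k) univ s := by
    intro s k
    rw [hy]
    simp only [sgnSum]
    rw [show ⇑(∑ i, (if i ∈ s then x i else -x i)) = ∑ i : Fin n, ⇑(if i ∈ s then x i else -x i)
      from by rw [lp.coeFn_sum]]
    rw [Finset.sum_apply]
    refine Finset.sum_congr rfl fun i _ => ?_
    by_cases h : i ∈ s
    · simp [h]
    · simp [h, lp.coeFn_neg]
  have hnorm : ∀ s, ‖y s‖ = ∑' k, |sgnSum (fun i => x i k) univ s| := by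
    intro s
    rw [L1.norm_eq_tsum]
    exact tsum_congr fun k => by rw [hcoord]
  have hsumm : ∀ s, Summable (fun k => |sgnSum (fun i => x i k) univ s|) := by
    intro s
    have := L1.summable_abs (y s)
    refine this.congr fun k => by rw [hcoord]
  have hswap : ∑ s ∈ (univ : Finset (Fin n)).powerset, ‖y s‖
      = ∑' k, ∑ s ∈ (univ : Finset (Fin n)).powerset, |sgnSum (fun i => x i k) univ s| := by
    rw [Finset.sum_congr rfl fun s _ => hnorm s]
    exact (Summable.tsum_finsetSum fun s _ => hsumm s).symm
  rw [hswap]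
  have hkh : ∀ k, 2 ^ n * Real.sqrt ((∑ i, (x i k) ^ 2) / 3)
      ≤ ∑ s ∈ (univ : Finset (Fin n)).powerset, |sgnSum (fun i => x i k) univ s| := by
    intro k
    have := khintchine_lower (fun i => x i k) (univ : Finset (Fin n))
    simpa [Finset.card_univ] using this
  have hsum1 : Summable (fun k => 2 ^ n * Real.sqrt ((∑ i, (x i k) ^ 2) / 3)) := by
    have : (fun k => 2 ^ n * Real.sqrt ((∑ i, (x i k) ^ 2) / 3))
        = (fun k => (2 ^ n / Real.sqrt 3) * Real.sqrt (∑ i, (x i k) ^ 2)) := by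
      funext k
      rw [Real.sqrt_div (Finset.sum_nonneg fun i _ => sq_nonneg _)]
      ring
    rw [this]
    exact (summable_sqrt_sum_sq x).mul_left _
  have hsum2 : Summable (fun k => ∑ s ∈ (univ : Finset (Fin n)).powerset,
      |sgnSum (fun i => x i k) univ s|) := summable_sum fun s _ => hsumm s
  have main : ∑' k, 2 ^ n * Real.sqrt ((∑ i, (x i k) ^ 2) / 3)
      ≤ ∑' k, ∑ s ∈ (univ : Finset (Fin n)).powerset, |sgnSum (fun i => x i k) univ s| :=
    Summable.tsum_le_tsum hkh hsum1 hsum2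
  refine le_trans ?_ main
  -- 2^n √(Σ‖xᵢ‖²/3) ≤ Σ'_k 2^n √(Q_k/3)
  have rearr : ∀ Q : ℝ, 0 ≤ Q → 2 ^ n * Real.sqrt (Q / 3)
      = (2 ^ n / Real.sqrt 3) * Real.sqrt Q := by
    intro Q hQ
    rw [Real.sqrt_div hQ]
    ring
  rw [rearr _ (Finset.sum_nonneg fun i _ => sq_nonneg _)]
  have : ∑' k, 2 ^ n * Real.sqrt ((∑ i, (x i k) ^ 2) / 3)
      = (2 ^ n / Real.sqrt 3) * ∑' k, Real.sqrt (∑ i, (x i k) ^ 2) := by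
    rw [← tsum_mul_left]
    exact tsum_congr fun k => rearr _ (Finset.sum_nonneg fun i _ => sq_nonneg _)
  rw [this]
  have hc : (0:ℝ) ≤ 2 ^ n / Real.sqrt 3 := by positivity
  exact mul_le_mul_of_nonneg_left (minkowski_l1 x) hc

section Zside
open Finset
open scoped ENNReal

variable {α : Type*} [DecidableEq α] {E : α → Type*} [∀ i, NormedAddCommGroup (E i)]

lemma lp_single_add (q : ℝ≥0∞) [Fact (1 ≤ q)] (i : α) (a b : E i) :
    lp.single q i (a + b) = lp.single q i a + lp.single q i b := by
  refine lp.ext (funext fun j => ?_)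
  by_cases h : j = i
  · subst h
    simp only [lp.coeFn_add, Pi.add_apply, lp.single_apply_self]
  · simp only [lp.coeFn_add, Pi.add_apply, lp.single_apply_ne _ _ _ h, add_zero]

lemma lp_single_sum (q : ℝ≥0∞) [Fact (1 ≤ q)] (i : α) {ι : Type*} (t : Finset ι)
    (v : ι → E i) :
    lp.single q i (∑ j ∈ t, v j) = ∑ j ∈ t, lp.single q i (v j) :=
  map_sum (AddMonoidHom.mk' (fun a => lp.single q i a) (fun a b => lp_single_add q i a b)) v t

lemma lp_single_norm (q : ℝ≥0∞) [Fact (1 ≤ q)] (hq : 0 < q.toReal) (i : α) (v : E i) :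
    ‖lp.single q i v‖ = ‖v‖ := by
  exact lp.norm_single (ENNReal.toReal_pos_iff.mp hq).1 i v

end Zside

theorem lp_sum_not_embed_l1 (p : ℝ≥0∞) [Fact (1 ≤ p)] (hp : 2 < p) (hp' : p ≠ ⊤) :
    ¬ ∃ (f : lp (fun n : ℕ => PiLp p (fun _ : Fin n => ℝ)) 1 →L[ℝ]
          lp (fun _ : ℕ => ℝ) 1),
        ∃ c : ℝ, 0 < c ∧ ∀ z, c * ‖z‖ ≤ ‖f z‖ := by
  classical
  rintro ⟨f, c, hc, hlow⟩
  set p' := p.toReal with hp'def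
  have hp2 : 2 < p' := by
    have := (ENNReal.toReal_lt_toReal (by norm_num) hp').mpr hp
    simpa using this
  have hppos : 0 < p' := by linarith
  -- key estimate
  have key : ∀ n : ℕ, c / Real.sqrt 3 * Real.sqrt n ≤ ‖f‖ * (n : ℝ) ^ (1 / p') := by
    intro n
    set e : Fin n → PiLp p (fun _ : Fin n => ℝ) :=
      fun i => (WithLp.equiv p _).symm (Pi.single i 1) with he
    have he_coord : ∀ i j, e i j = if j = i then (1:ℝ) else 0 := by
      intro i j
      rw [he]
      simp [WithLp.equiv_symm_apply, Pi.single_apply]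
    have he_norm : ∀ i, ‖e i‖ = 1 := by
      intro i
      rw [PiLp.norm_eq_sum hppos]
      have : ∑ j, ‖e i j‖ ^ p' = 1 := by
        rw [Finset.sum_eq_single i]
        · rw [he_coord]; simp [Real.one_rpow]
        · intro j _ hj
          rw [he_coord, if_neg hj]
          simp [Real.zero_rpow hppos.ne']
        · simp
      rw [this, Real.one_rpow]
    set z : Fin n → lp (fun m : ℕ => PiLp p (fun _ : Fin m => ℝ)) 1 :=
      fun i => lp.single 1 n (e i) with hz
    have hz_norm : ∀ i, ‖z i‖ = 1 := by
      intro i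
      simp only [hz]
      rw [lp_single_norm (E := fun m : ℕ => PiLp p (fun _ : Fin m => ℝ)) 1 (by norm_num) n (e i),
        he_norm]
    set x : Fin n → lp (fun _ : ℕ => ℝ) 1 := fun i => f (z i) with hx
    have hx_low : ∀ i, c ≤ ‖x i‖ := by
      intro i
      have := hlow (z i)
      rwa [hz_norm i, mul_one] at this
    -- the signed sums
    set w : Finset (Fin n) → PiLp p (fun _ : Fin n => ℝ) :=
      fun s => ∑ i, (if i ∈ s then e i else -e i) with hw
    have hw_coord : ∀ s j, w s j = if j ∈ s then (1:ℝ) else -1 := by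
      intro s j
      simp only [hw]
      rw [show (∑ i, (if i ∈ s then e i else -e i)) j
          = ∑ i, ((if i ∈ s then e i else -e i) j) from by rw [WithLp.ofLp_sum, Finset.sum_apply]]
      rw [Finset.sum_eq_single j]
      · by_cases h : j ∈ s <;> simp [h, he_coord]
      · intro i _ hij
        by_cases h : i ∈ s <;> simp [h, he_coord, if_neg (Ne.symm hij)]
      · simp
    have hw_norm : ∀ s, ‖w s‖ = (n : ℝ) ^ (1 / p') := by
      intro s
      rw [PiLp.norm_eq_sum hppos]
      have : ∑ j, ‖w s j‖ ^ p' = n := by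
        have : ∀ j : Fin n, ‖w s j‖ ^ p' = 1 := by
          intro j
          rw [hw_coord]
          by_cases h : j ∈ s <;> simp [h, Real.one_rpow]
        rw [Finset.sum_congr rfl fun j _ => this j]
        simp
      rw [this]
    have hy_eq : ∀ s : Finset (Fin n),
        (∑ i, (if i ∈ s then z i else -z i)) = lp.single 1 n (w s) := by
      intro s
      rw [hw, lp_single_sum]
      refine Finset.sum_congr rfl fun i _ => ?_
      by_cases h : i ∈ s
      · simp [h, hz]
      · simp [h, hz, lp.single_neg]
    have hfy : ∀ s : Finset (Fin n),
        (∑ i, (if i ∈ s then x i else -x i)) = f (∑ i, (if i ∈ s then z i else -z i)) := by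
      intro s
      rw [map_sum]
      refine Finset.sum_congr rfl fun i _ => ?_
      by_cases h : i ∈ s
      · simp [h, hx]
      · simp [h, hx, map_neg]
    have hub : ∀ s : Finset (Fin n),
        ‖∑ i, (if i ∈ s then x i else -x i)‖ ≤ ‖f‖ * (n : ℝ) ^ (1 / p') := by
      intro s
      rw [hfy s]
      calc ‖f (∑ i, (if i ∈ s then z i else -z i))‖
          ≤ ‖f‖ * ‖∑ i, (if i ∈ s then z i else -z i)‖ := f.le_opNorm _
        _ = ‖f‖ * (n : ℝ) ^ (1 / p') := by
            rw [hy_eq s,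
              lp_single_norm (E := fun m : ℕ => PiLp p (fun _ : Fin m => ℝ)) 1 (by norm_num)
                n (w s), hw_norm s]
    -- cotype lower bound
    have hcot := l1_cotype x
    have hlb : 2 ^ n * (c / Real.sqrt 3 * Real.sqrt n)
        ≤ 2 ^ n * Real.sqrt ((∑ i, ‖x i‖ ^ 2) / 3) := by
      have hsum : (n : ℝ) * c ^ 2 ≤ ∑ i, ‖x i‖ ^ 2 := by
        calc (n : ℝ) * c ^ 2 = ∑ _i : Fin n, c ^ 2 := by simp [mul_comm]
          _ ≤ ∑ i, ‖x i‖ ^ 2 := Finset.sum_le_sum fun i _ =>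
              pow_le_pow_left₀ hc.le (hx_low i) 2
      have : c / Real.sqrt 3 * Real.sqrt n = Real.sqrt ((n * c ^ 2) / 3) := by
        rw [show (n * c ^ 2 : ℝ) / 3 = (c ^ 2 / 3) * n by ring, Real.sqrt_mul (by positivity),
          Real.sqrt_div (sq_nonneg c), Real.sqrt_sq hc.le]
      rw [this]
      exact mul_le_mul_of_nonneg_left
        (Real.sqrt_le_sqrt (by linarith [hsum] )) (by positivity)
    have hub' : ∑ s ∈ (univ : Finset (Fin n)).powerset, ‖∑ i, (if i ∈ s then x i else -x i)‖
        ≤ 2 ^ n * (‖f‖ * (n : ℝ) ^ (1 / p')) := by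
      calc ∑ s ∈ (univ : Finset (Fin n)).powerset, ‖∑ i, (if i ∈ s then x i else -x i)‖
          ≤ ∑ _s ∈ (univ : Finset (Fin n)).powerset, ‖f‖ * (n : ℝ) ^ (1 / p') :=
            Finset.sum_le_sum fun s _ => hub s
        _ = 2 ^ n * (‖f‖ * (n : ℝ) ^ (1 / p')) := by
            rw [Finset.sum_const, Finset.card_powerset, Finset.card_univ, Fintype.card_fin]
            simp [nsmul_eq_mul]
      
    have := le_trans (le_trans hlb hcot) hub'
    have h2n : (0:ℝ) < 2 ^ n := by positivity
    exact le_of_mul_le_mul_left this h2n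
  -- derive contradiction
  have hhalf : 1 / p' < 1 / 2 := by
    rw [div_lt_div_iff₀ hppos (by norm_num)]
    linarith
  set δ : ℝ := 1 / 2 - 1 / p' with hδ
  have hδpos : 0 < δ := by rw [hδ]; linarith
  have bound : ∀ n : ℕ, 1 ≤ n → (n : ℝ) ^ δ ≤ Real.sqrt 3 * ‖f‖ / c := by
    intro n hn
    have hn0 : (0:ℝ) < n := by exact_mod_cast hn
    have hkey := key n
    have hsq : Real.sqrt n = (n : ℝ) ^ (1 / p') * (n : ℝ) ^ δ := by
      rw [← Real.rpow_add hn0, Real.sqrt_eq_rpow]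
      congr 1
      rw [hδ]; ring
    rw [hsq] at hkey
    have hrp : (0:ℝ) < (n : ℝ) ^ (1 / p') := Real.rpow_pos_of_pos hn0 _
    have hs3 : (0:ℝ) < Real.sqrt 3 := by positivity
    have h2 : c / Real.sqrt 3 * (n : ℝ) ^ δ ≤ ‖f‖ := by
      have hmul : (c / Real.sqrt 3 * (n:ℝ) ^ δ) * (n:ℝ) ^ (1/p') ≤ ‖f‖ * (n:ℝ) ^ (1/p') := by
        calc (c / Real.sqrt 3 * (n:ℝ) ^ δ) * (n:ℝ) ^ (1/p')
            = c / Real.sqrt 3 * ((n:ℝ) ^ (1/p') * (n:ℝ) ^ δ) := by ring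
          _ ≤ ‖f‖ * (n:ℝ) ^ (1/p') := hkey
      exact le_of_mul_le_mul_right hmul hrp
    rw [le_div_iff₀ hc]
    calc (n:ℝ) ^ δ * c = (c / Real.sqrt 3 * (n:ℝ) ^ δ) * Real.sqrt 3 := by
          field_simp
      _ ≤ ‖f‖ * Real.sqrt 3 := mul_le_mul_of_nonneg_right h2 hs3.le
      _ = Real.sqrt 3 * ‖f‖ := by ring
  have htend : Filter.Tendsto (fun n : ℕ => (n : ℝ) ^ δ) Filter.atTop Filter.atTop :=
    (tendsto_rpow_atTop hδpos).comp tendsto_natCast_atTop_atTop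
  obtain ⟨n, hn1, hn2⟩ := ((htend.eventually_gt_atTop (Real.sqrt 3 * ‖f‖ / c)).and
    (Filter.eventually_ge_atTop 1)).exists
  exact absurd (bound n hn2) (not_le.mpr hn1)
end

section
/- There is no sequence (x_m) in (ℓ¹, N), where N is the Terenzi norm, satisfying N(x_m − x_k) = λ for some fixed λ > 0 and all m ≠ k; i.e., ℓ¹ with the Terenzi norm contains no infinite equilateral set. -/
open Filter Finset Topology

namespace TerenziAux


lemma terenzi_step (a : ℕ → ℝ) (n : ℕ) :
    terenzi a (n+2) = (1 - 1/((n:ℝ)+3)) * (|a (n+2)| + terenzi a (n+1))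
      + (1/((n:ℝ)+3)) * max (|a (n+2)| / ((n:ℝ)+2)) (terenzi a (n+1)) := rfl

lemma c_pos (n : ℕ) : (0:ℝ) < 1/((n:ℝ)+3) := by positivity
lemma c_lt_one (n : ℕ) : (1:ℝ)/((n:ℝ)+3) < 1 := by
  rw [div_lt_one (by positivity)]; linarith [Nat.cast_nonneg (α := ℝ) n]

lemma t_nonneg (a : ℕ → ℝ) : ∀ n, 0 ≤ terenzi a n := by
  intro n
  induction n using Nat.twoStepInduction with
  | zero => simp [terenzi]
  | one => simp [terenzi, abs_nonneg]
  | more n ih1 ih2 =>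
    rw [terenzi_step]
    have h1 : (0:ℝ) ≤ 1 - 1/((n:ℝ)+3) := by linarith [c_lt_one n]
    have : (0:ℝ) ≤ max (|a (n+2)| / ((n:ℝ)+2)) (terenzi a (n+1)) :=
      le_max_of_le_right ih2
    have habs : (0:ℝ) ≤ |a (n+2)| := abs_nonneg _
    have hc := c_pos n
    positivity

lemma t_mono_step (a : ℕ → ℝ) (n : ℕ) : terenzi a n ≤ terenzi a (n+1) := by
  cases n with
  | zero => simp [terenzi, abs_nonneg]
  | succ n =>
    rw [terenzi_step]
    set c := 1/((n:ℝ)+3) with hc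
    set t := terenzi a (n+1) with ht
    set u := |a (n+2)| with hu
    have hcp := c_pos n; have hcl := c_lt_one n
    have hm : t ≤ max (u / ((n:ℝ)+2)) t := le_max_right _ _
    have p2 : c*t ≤ c * max (u / ((n:ℝ)+2)) t := by
      apply mul_le_mul_of_nonneg_left hm (le_of_lt hcp)
    have p1 : (1-c)*(u+t) = (1-c)*u + ((1-c)*t) := by ring
    have p4 : (1-c)*t + c*t = t := by ring
    have p3 : 0 ≤ (1-c)*u := by
      apply mul_nonneg (by linarith) (abs_nonneg _)
    linarith

lemma t_mono (a : ℕ → ℝ) : Monotone (terenzi a) :=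
  monotone_nat_of_le_succ (t_mono_step a)

lemma t_step_lower (a : ℕ → ℝ) (n : ℕ) :
    (1 - 1/((n:ℝ)+3)) * |a (n+2)| + terenzi a (n+1) ≤ terenzi a (n+2) := by
  rw [terenzi_step]
  set c := 1/((n:ℝ)+3) with hc
  set t := terenzi a (n+1) with ht
  set u := |a (n+2)| with hu
  have hcp := c_pos n
  have hm : t ≤ max (u / ((n:ℝ)+2)) t := le_max_right _ _
  have p2 : c*t ≤ c * max (u / ((n:ℝ)+2)) t :=
    mul_le_mul_of_nonneg_left hm (le_of_lt hcp)
  have p1 : (1-c)*(u+t) = (1-c)*u + ((1-c)*t) := by ring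
  have p4 : (1-c)*t + c*t = t := by ring
  linarith

lemma t_step_upper (a : ℕ → ℝ) (n : ℕ) :
    terenzi a (n+2) ≤ terenzi a (n+1) + (1 - 1/((n:ℝ)+3)) * |a (n+2)|
      + (1/((n:ℝ)+3)) * (|a (n+2)| / ((n:ℝ)+2)) := by
  rw [terenzi_step]
  set c := 1/((n:ℝ)+3) with hc
  set t := terenzi a (n+1) with ht
  set u := |a (n+2)| with hu
  have hcp := c_pos n
  have ht0 : 0 ≤ t := t_nonneg a (n+1)
  have hu0 : (0:ℝ) ≤ u := abs_nonneg _
  have hd0 : (0:ℝ) ≤ u / ((n:ℝ)+2) := by positivity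
  have hm : max (u / ((n:ℝ)+2)) t ≤ t + u / ((n:ℝ)+2) := by
    apply max_le <;> linarith
  have p2 : c * max (u / ((n:ℝ)+2)) t ≤ c*(t + u / ((n:ℝ)+2)) :=
    mul_le_mul_of_nonneg_left hm (le_of_lt hcp)
  have p1 : (1-c)*(u+t) = (1-c)*u + ((1-c)*t) := by ring
  have p3 : c*(t + u / ((n:ℝ)+2)) = c*t + c*(u / ((n:ℝ)+2)) := by ring
  have p4 : (1-c)*t + c*t = t := by ring
  linarith

lemma t_step_upper' (a : ℕ → ℝ) (n : ℕ) :
    terenzi a (n+2) ≤ terenzi a (n+1) + |a (n+2)| := by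
  have h := t_step_upper a n
  set c := 1/((n:ℝ)+3) with hc
  set u := |a (n+2)| with hu
  have hcp := c_pos n
  have hu0 : (0:ℝ) ≤ u := abs_nonneg _
  have q1 : u/((n:ℝ)+2) ≤ u := by
    apply div_le_self hu0 (by linarith [Nat.cast_nonneg (α := ℝ) n])
  have q2 : c*(u/((n:ℝ)+2)) ≤ c*u := mul_le_mul_of_nonneg_left q1 (le_of_lt hcp)
  have q3 : (1-c)*u + c*u = u := by ring
  linarith

lemma t_le_sum (a : ℕ → ℝ) : ∀ n, terenzi a n ≤ ∑ i ∈ Icc 1 n, |a i| := by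
  intro n
  induction n using Nat.twoStepInduction with
  | zero => simp [terenzi]
  | one => simp [terenzi]
  | more n ih1 ih2 =>
    have h := t_step_upper' a n
    have hs : (∑ i ∈ Icc 1 (n+2), |a i|) = (∑ i ∈ Icc 1 (n+1), |a i|) + |a (n+2)| := by
      rw [Finset.sum_Icc_succ_top (by omega : 1 ≤ n+2)]
    rw [hs]; linarith

lemma sum_le_t (a : ℕ → ℝ) : ∀ n, (2/3 : ℝ) * ∑ i ∈ Icc 1 n, |a i| ≤ terenzi a n := by
  intro n
  induction n using Nat.twoStepInduction with
  | zero => simp [terenzi]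
  | one => simp [terenzi]; nlinarith [abs_nonneg (a 1)]
  | more n ih1 ih2 =>
    have h := t_step_lower a n
    have hs : (∑ i ∈ Icc 1 (n+2), |a i|) = (∑ i ∈ Icc 1 (n+1), |a i|) + |a (n+2)| := by
      rw [Finset.sum_Icc_succ_top (by omega : 1 ≤ n+2)]
    have hcoef : (2/3 : ℝ) ≤ 1 - 1/((n:ℝ)+3) := by
      have : 1/((n:ℝ)+3) ≤ 1/3 := by
        apply div_le_div_of_nonneg_left (by norm_num) (by norm_num)
        linarith [Nat.cast_nonneg (α := ℝ) n]
      linarith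
    have habs : (0:ℝ) ≤ |a (n+2)| := abs_nonneg _
    rw [hs]
    nlinarith




/-- Lipschitz property of the partial Terenzi norm. -/
lemma t_lipschitz (a b : ℕ → ℝ) : ∀ n, |terenzi a n - terenzi b n| ≤ ∑ i ∈ Icc 1 n, |a i - b i| := by
  intro n
  induction n using Nat.twoStepInduction with
  | zero => simp [terenzi]
  | one => simpa [terenzi] using abs_abs_sub_abs_le_abs_sub (a 1) (b 1)
  | more n ih1 ih2 =>
    rw [terenzi_step, terenzi_step]
    set c := 1/((n:ℝ)+3) with hc
    have hcp := c_pos n; have hcl := c_lt_one n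
    set A := |a (n+2)| + terenzi a (n+1) with hA
    set A' := |b (n+2)| + terenzi b (n+1) with hA'
    set B := max (|a (n+2)| / ((n:ℝ)+2)) (terenzi a (n+1)) with hB
    set B' := max (|b (n+2)| / ((n:ℝ)+2)) (terenzi b (n+1)) with hB'
    have hs : (∑ i ∈ Icc 1 (n+2), |a i - b i|) = (∑ i ∈ Icc 1 (n+1), |a i - b i|) + |a (n+2) - b (n+2)| := by
      rw [Finset.sum_Icc_succ_top (by omega : 1 ≤ n+2)]
    set D := ∑ i ∈ Icc 1 (n+1), |a i - b i| with hD
    have hD0 : 0 ≤ D := Finset.sum_nonneg (fun i _ => abs_nonneg _)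
    have habs : |(|a (n+2)| - |b (n+2)|)| ≤ |a (n+2) - b (n+2)| := abs_abs_sub_abs_le_abs_sub _ _
    have hAA : |A - A'| ≤ |a (n+2) - b (n+2)| + D := by
      have : A - A' = (|a (n+2)| - |b (n+2)|) + (terenzi a (n+1) - terenzi b (n+1)) := by
        rw [hA, hA']; ring
      rw [this]
      calc |(|a (n+2)| - |b (n+2)|) + (terenzi a (n+1) - terenzi b (n+1))|
          ≤ |(|a (n+2)| - |b (n+2)|)| + |terenzi a (n+1) - terenzi b (n+1)| := abs_add_le _ _
        _ ≤ |a (n+2) - b (n+2)| + D := add_le_add habs ih2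
    have hBB : |B - B'| ≤ |a (n+2) - b (n+2)| + D := by
      have h1 := abs_max_sub_max_le_max (|a (n+2)| / ((n:ℝ)+2)) (terenzi a (n+1))
        (|b (n+2)| / ((n:ℝ)+2)) (terenzi b (n+1))
      apply le_trans h1
      apply max_le
      · have h2 : (0:ℝ) < (n:ℝ)+2 := by positivity
        have e5 : |(|a (n+2)| / ((n:ℝ)+2) - |b (n+2)| / ((n:ℝ)+2))| = |(|a (n+2)| - |b (n+2)|)| / ((n:ℝ)+2) := by
          rw [div_sub_div_same, abs_div, abs_of_pos h2]
        rw [e5]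
        have h3 : |(|a (n+2)| - |b (n+2)|)| / ((n:ℝ)+2) ≤ |(|a (n+2)| - |b (n+2)|)| := by
          apply div_le_self (abs_nonneg _) (by linarith [Nat.cast_nonneg (α := ℝ) n])
        linarith
      · have := ih2; linarith [abs_nonneg (a (n+2) - b (n+2))]
    have key : (1-c)*A + c*B - ((1-c)*A' + c*B') = (1-c)*(A-A') + c*(B-B') := by ring
    rw [hs, key]
    calc |(1-c)*(A-A') + c*(B-B')| ≤ |(1-c)*(A-A')| + |c*(B-B')| := abs_add_le _ _
      _ = (1-c)*|A-A'| + c*|B-B'| := by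
          rw [abs_mul, abs_mul, abs_of_pos hcp, abs_of_pos (by linarith : (0:ℝ) < 1-c)]
      _ ≤ (1-c)*(|a (n+2) - b (n+2)| + D) + c*(|a (n+2) - b (n+2)| + D) := by
          apply add_le_add
          · exact mul_le_mul_of_nonneg_left hAA (by linarith)
          · exact mul_le_mul_of_nonneg_left hBB (le_of_lt hcp)
      _ = D + |a (n+2) - b (n+2)| := by ring

lemma t_congr (a b : ℕ → ℝ) (n : ℕ) (h : ∀ i, 1 ≤ i → i ≤ n → a i = b i) :
    terenzi a n = terenzi b n := by
  have h1 := t_lipschitz a b n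
  have h2 : (∑ i ∈ Icc 1 n, |a i - b i|) = 0 := by
    apply Finset.sum_eq_zero
    intro i hi
    rw [Finset.mem_Icc] at hi
    rw [h i hi.1 hi.2, sub_self, abs_zero]
  rw [h2] at h1
  have := abs_nonneg (terenzi a n - terenzi b n)
  have : |terenzi a n - terenzi b n| = 0 := le_antisymm h1 this
  linarith [abs_eq_zero.mp this, sub_eq_zero.mp (abs_eq_zero.mp this)]

lemma t_zero_prefix (a : ℕ → ℝ) (n : ℕ) (h : ∀ i, 1 ≤ i → i ≤ n → a i = 0) :
    terenzi a n = 0 := by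
  have h1 := t_le_sum a n
  have h2 : (∑ i ∈ Icc 1 n, |a i|) = 0 := by
    apply Finset.sum_eq_zero
    intro i hi
    rw [Finset.mem_Icc] at hi
    rw [h i hi.1 hi.2, abs_zero]
  have := t_nonneg a n
  linarith

lemma t_pos (a : ℕ → ℝ) (q : ℕ) (hq : 1 ≤ q) (ha : a q ≠ 0) : 0 < terenzi a q := by
  have h1 := sum_le_t a q
  have h2 : |a q| ≤ ∑ i ∈ Icc 1 q, |a i| := by
    apply Finset.single_le_sum (fun i _ => abs_nonneg (a i))
    rw [Finset.mem_Icc]; omega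
  have h3 : 0 < |a q| := abs_pos.mpr ha
  linarith

/-- shifted one-step bounds: for `n ≥ 1`. -/
lemma t_step_lower'' (a : ℕ → ℝ) (n : ℕ) (hn : 1 ≤ n) :
    (((n:ℝ)+1)/((n:ℝ)+2)) * |a (n+1)| + terenzi a n ≤ terenzi a (n+1) := by
  obtain ⟨m, rfl⟩ : ∃ m, n = m + 1 := ⟨n-1, by omega⟩
  have h := t_step_lower a m
  have hm3 : (0:ℝ) < (m:ℝ)+3 := by positivity
  have ec1 : ((m+1:ℕ):ℝ)+1 = (m:ℝ)+2 := by push_cast; ring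
  have ec2 : ((m+1:ℕ):ℝ)+2 = (m:ℝ)+3 := by push_cast; ring
  have ec3 : 1 - 1/((m:ℝ)+3) = ((m:ℝ)+2)/((m:ℝ)+3) := by
    field_simp
    ring
  rw [ec1, ec2]
  rw [ec3] at h
  exact h

lemma t_step_upper'' (a : ℕ → ℝ) (n : ℕ) (hn : 1 ≤ n) :
    terenzi a (n+1) ≤ terenzi a n + (((n:ℝ)+1)/((n:ℝ)+2)) * |a (n+1)|
      + (1/(((n:ℝ)+1)*((n:ℝ)+2))) * |a (n+1)| := by
  obtain ⟨m, rfl⟩ : ∃ m, n = m + 1 := ⟨n-1, by omega⟩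
  have h := t_step_upper a m
  have hm2 : (0:ℝ) < (m:ℝ)+2 := by positivity
  have hm3 : (0:ℝ) < (m:ℝ)+3 := by positivity
  have e4 : (1/((m:ℝ)+3)) * (|a (m+2)| / ((m:ℝ)+2)) = (1/(((m:ℝ)+2)*((m:ℝ)+3))) * |a (m+2)| := by
    field_simp
  rw [e4] at h
  have ec1 : ((m+1:ℕ):ℝ)+1 = (m:ℝ)+2 := by push_cast; ring
  have ec2 : ((m+1:ℕ):ℝ)+2 = (m:ℝ)+3 := by push_cast; ring
  have ec3 : 1 - 1/((m:ℝ)+3) = ((m:ℝ)+2)/((m:ℝ)+3) := by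
    field_simp
    ring
  rw [ec1, ec2]
  rw [ec3] at h
  exact h




lemma t_window_low (a : ℕ → ℝ) (M : ℕ) (hM : 1 ≤ M) :
    ∀ n, M ≤ n → terenzi a M + ∑ i ∈ Ioc M n, (((i:ℝ))/((i:ℝ)+1)) * |a i| ≤ terenzi a n := by
  intro n hn
  induction n, hn using Nat.le_induction with
  | base => simp
  | succ n hn ih =>
    rw [Finset.sum_Ioc_succ_top hn]
    have h := t_step_lower'' a n (le_trans hM hn)
    have hc : (((n+1:ℕ):ℝ))/(((n+1:ℕ):ℝ)+1) = ((n:ℝ)+1)/((n:ℝ)+2) := by push_cast; ring_nf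
    rw [hc]
    linarith

lemma t_window_high (a : ℕ → ℝ) (M : ℕ) (hM : 1 ≤ M) :
    ∀ n, M ≤ n → terenzi a n ≤ terenzi a M + (∑ i ∈ Ioc M n, (((i:ℝ))/((i:ℝ)+1)) * |a i|)
      + (1/(((M:ℝ)+1)*((M:ℝ)+2))) * ∑ i ∈ Ioc M n, |a i| := by
  intro n hn
  induction n, hn using Nat.le_induction with
  | base => simp
  | succ n hn ih =>
    rw [Finset.sum_Ioc_succ_top hn, Finset.sum_Ioc_succ_top hn]
    have h := t_step_upper'' a n (le_trans hM hn)
    have hc : (((n+1:ℕ):ℝ))/(((n+1:ℕ):ℝ)+1) = ((n:ℝ)+1)/((n:ℝ)+2) := by push_cast; ring_nf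
    rw [hc]
    have hcoef : (1:ℝ)/(((n:ℝ)+1)*((n:ℝ)+2)) ≤ 1/(((M:ℝ)+1)*((M:ℝ)+2)) := by
      apply one_div_le_one_div_of_le (by positivity)
      have hMn : ((M:ℝ)) ≤ (n:ℝ) := Nat.cast_le.mpr hn
      nlinarith [Nat.cast_nonneg (α := ℝ) M]
    have habs : (0:ℝ) ≤ |a (n+1)| := abs_nonneg _
    have h2 : (1/(((n:ℝ)+1)*((n:ℝ)+2))) * |a (n+1)| ≤ (1/(((M:ℝ)+1)*((M:ℝ)+2))) * |a (n+1)| :=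
      mul_le_mul_of_nonneg_right hcoef habs
    have h3 : (1/(((M:ℝ)+1)*((M:ℝ)+2))) * ((∑ i ∈ Ioc M n, |a i|) + |a (n+1)|)
        = (1/(((M:ℝ)+1)*((M:ℝ)+2))) * (∑ i ∈ Ioc M n, |a i|)
          + (1/(((M:ℝ)+1)*((M:ℝ)+2))) * |a (n+1)| := by ring
    rw [h3]
    linarith

noncomputable def NT (a : ℕ → ℝ) : ℝ := ⨆ n, terenzi a n

lemma t_le_of_tendsto {a : ℕ → ℝ} {L : ℝ} (h : Tendsto (terenzi a) atTop (𝓝 L)) :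
    ∀ n, terenzi a n ≤ L :=
  fun n => Monotone.ge_of_tendsto (t_mono a) h n

lemma nt_tendsto {a : ℕ → ℝ} (h : BddAbove (Set.range (terenzi a))) :
    Tendsto (terenzi a) atTop (𝓝 (NT a)) :=
  tendsto_atTop_ciSup (t_mono a) h

lemma nt_eq_of_tendsto {a : ℕ → ℝ} {L : ℝ} (h : Tendsto (terenzi a) atTop (𝓝 L)) :
    NT a = L := by
  have hb : BddAbove (Set.range (terenzi a)) := by
    refine ⟨L, ?_⟩
    rintro y ⟨n, rfl⟩
    exact t_le_of_tendsto h n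
  exact tendsto_nhds_unique (nt_tendsto hb) h






lemma sum_Ioc_le_sum_Icc (h : ℕ → ℝ) (M n : ℕ) :
    (∑ i ∈ Ioc M n, |h i|) ≤ ∑ i ∈ Icc 1 n, |h i| := by
  apply Finset.sum_le_sum_of_subset_of_nonneg
  · intro i hi
    rw [Finset.mem_Ioc] at hi
    rw [Finset.mem_Icc]
    omega
  · intro i _ _
    exact abs_nonneg _

/-- The key approximate-additivity estimate. -/
lemma key_est (f g : ℕ → ℝ) (Bf Bg τ : ℝ) (M : ℕ) (hM : 1 ≤ M)
    (hBf : ∀ n, (∑ i ∈ Icc 1 n, |f i|) ≤ Bf)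
    (hBg : ∀ n, (∑ i ∈ Icc 1 n, |g i|) ≤ Bg)
    (htail : ∀ n, M ≤ n → (∑ i ∈ Ioc M n, |f i|) ≤ τ) :
    |NT (fun i => f i - g i) - NT f - NT g| ≤
      2 * (∑ i ∈ Icc 1 M, |g i|) + 2 * τ + (1/(((M:ℝ)+1)*((M:ℝ)+2))) * (2*(Bf + Bg)) := by
  set d : ℕ → ℝ := fun i => f i - g i with hd
  have hd' : ∀ i, d i = f i - g i := fun i => rfl
  set P : ℝ := ∑ i ∈ Icc 1 M, |g i| with hP
  set cM : ℝ := 1/(((M:ℝ)+1)*((M:ℝ)+2)) with hcM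
  have hcM0 : 0 ≤ cM := by positivity
  -- uniform bounds on partial sums of |d|
  have hBd : ∀ n, (∑ i ∈ Icc 1 n, |d i|) ≤ Bf + Bg := by
    intro n
    have h1 : (∑ i ∈ Icc 1 n, |d i|) ≤ ∑ i ∈ Icc 1 n, (|f i| + |g i|) := by
      apply Finset.sum_le_sum
      intro i _
      rw [hd' i]
      exact abs_sub _ _
    rw [Finset.sum_add_distrib] at h1
    linarith [hBf n, hBg n]
  -- finite-n estimate
  have hfin : ∀ n, M ≤ n → |terenzi d n - terenzi f n - terenzi g n| ≤
      2*P + 2*τ + cM * (2*(Bf + Bg)) := by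
    intro n hn
    set Wd : ℝ := ∑ i ∈ Ioc M n, (((i:ℝ))/((i:ℝ)+1)) * |d i| with hWd
    set Wf : ℝ := ∑ i ∈ Ioc M n, (((i:ℝ))/((i:ℝ)+1)) * |f i| with hWf
    set Wg : ℝ := ∑ i ∈ Ioc M n, (((i:ℝ))/((i:ℝ)+1)) * |g i| with hWg
    have hd1 : terenzi d M + Wd ≤ terenzi d n := t_window_low d M hM n hn
    have hd2 : terenzi d n ≤ terenzi d M + Wd + cM * ∑ i ∈ Ioc M n, |d i| :=
      t_window_high d M hM n hn
    have hf1 : terenzi f M + Wf ≤ terenzi f n := t_window_low f M hM n hn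
    have hf2 : terenzi f n ≤ terenzi f M + Wf + cM * ∑ i ∈ Ioc M n, |f i| :=
      t_window_high f M hM n hn
    have hg1 : terenzi g M + Wg ≤ terenzi g n := t_window_low g M hM n hn
    have hg2 : terenzi g n ≤ terenzi g M + Wg + cM * ∑ i ∈ Ioc M n, |g i| :=
      t_window_high g M hM n hn
    -- prefix comparison
    have hpre1 : |terenzi d M - terenzi f M| ≤ P := by
      have h1 := t_lipschitz d f M
      have h2 : (∑ i ∈ Icc 1 M, |d i - f i|) = P := by
        rw [hP]
        apply Finset.sum_congr rfl
        intro i _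
        have : d i - f i = -(g i) := by rw [hd' i]; ring
        rw [this, abs_neg]
      rwa [h2] at h1
    have hpre2 : terenzi g M ≤ P := by
      have := t_le_sum g M
      linarith
    have hpre3 : 0 ≤ terenzi g M := t_nonneg g M
    -- weighted middle comparison
    have hW : |Wd - Wf - Wg| ≤ 2*τ := by
      have e1 : Wd - Wf - Wg = ∑ i ∈ Ioc M n,
          ((((i:ℝ))/((i:ℝ)+1)) * |d i| - (((i:ℝ))/((i:ℝ)+1)) * |f i| - (((i:ℝ))/((i:ℝ)+1)) * |g i|) := by
        rw [hWd, hWf, hWg, ← Finset.sum_sub_distrib, ← Finset.sum_sub_distrib]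
      rw [e1]
      apply le_trans (Finset.abs_sum_le_sum_abs _ _)
      have e2 : ∀ i ∈ Ioc M n,
          abs ((((i:ℝ))/((i:ℝ)+1)) * |d i| - (((i:ℝ))/((i:ℝ)+1)) * |f i| - (((i:ℝ))/((i:ℝ)+1)) * |g i|)
            ≤ 2 * |f i| := by
        intro i _
        have hw0 : 0 ≤ ((i:ℝ))/((i:ℝ)+1) := by positivity
        have hw1 : ((i:ℝ))/((i:ℝ)+1) ≤ 1 := by
          apply div_le_one_of_le₀ (by linarith) (by positivity)
        have efact : (((i:ℝ))/((i:ℝ)+1)) * |d i| - (((i:ℝ))/((i:ℝ)+1)) * |f i| - (((i:ℝ))/((i:ℝ)+1)) * |g i|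
            = (((i:ℝ))/((i:ℝ)+1)) * (|d i| - |f i| - |g i|) := by ring
        rw [efact, abs_mul, abs_of_nonneg hw0]
        have hptw : abs (|d i| - |f i| - |g i|) ≤ 2 * |f i| := by
          have t1 : |d i| ≤ |f i| + |g i| := by rw [hd' i]; exact abs_sub _ _
          have t2 : |g i| - |f i| ≤ |d i| := by
            have t3 := abs_sub_abs_le_abs_sub (g i) (f i)
            have e : |g i - f i| = |d i| := by rw [hd' i, abs_sub_comm]
            linarith [e.le]
          rw [abs_le]
          constructor <;> nlinarith [abs_nonneg (f i), abs_nonneg (g i), abs_nonneg (d i)]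
        calc (((i:ℝ))/((i:ℝ)+1)) * abs (|d i| - |f i| - |g i|)
            ≤ 1 * (2 * |f i|) := mul_le_mul hw1 hptw (abs_nonneg _) (by norm_num)
          _ = 2 * |f i| := by ring
      apply le_trans (Finset.sum_le_sum e2)
      rw [← Finset.mul_sum]
      linarith [htail n hn]
    -- error terms
    have hUf : (∑ i ∈ Ioc M n, |f i|) ≤ Bf := le_trans (sum_Ioc_le_sum_Icc f M n) (hBf n)
    have hUg : (∑ i ∈ Ioc M n, |g i|) ≤ Bg := le_trans (sum_Ioc_le_sum_Icc g M n) (hBg n)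
    have hUd : (∑ i ∈ Ioc M n, |d i|) ≤ Bf + Bg := le_trans (sum_Ioc_le_sum_Icc d M n) (hBd n)
    have hUf0 : 0 ≤ ∑ i ∈ Ioc M n, |f i| := Finset.sum_nonneg (fun i _ => abs_nonneg _)
    have hUg0 : 0 ≤ ∑ i ∈ Ioc M n, |g i| := Finset.sum_nonneg (fun i _ => abs_nonneg _)
    have hUd0 : 0 ≤ ∑ i ∈ Ioc M n, |d i| := Finset.sum_nonneg (fun i _ => abs_nonneg _)
    have hBf0 : 0 ≤ Bf := le_trans hUf0 (le_trans (sum_Ioc_le_sum_Icc f M n) (hBf n))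
    have hBg0 : 0 ≤ Bg := le_trans hUg0 (le_trans (sum_Ioc_le_sum_Icc g M n) (hBg n))
    have ecd : cM * (∑ i ∈ Ioc M n, |d i|) ≤ cM * (Bf + Bg) := mul_le_mul_of_nonneg_left hUd hcM0
    have ecf : cM * (∑ i ∈ Ioc M n, |f i|) ≤ cM * Bf := mul_le_mul_of_nonneg_left hUf hcM0
    have ecg : cM * (∑ i ∈ Ioc M n, |g i|) ≤ cM * Bg := mul_le_mul_of_nonneg_left hUg hcM0
    have ecf0 : 0 ≤ cM * (∑ i ∈ Ioc M n, |f i|) := by positivity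
    have ecg0 : 0 ≤ cM * (∑ i ∈ Ioc M n, |g i|) := by positivity
    have ecd0 : 0 ≤ cM * (∑ i ∈ Ioc M n, |d i|) := by positivity
    rw [abs_le]
    rw [abs_le] at hpre1 hW
    obtain ⟨hp1a, hp1b⟩ := hpre1
    obtain ⟨hWa, hWb⟩ := hW
    constructor <;> linarith
  -- pass to the limit
  have hbdf : BddAbove (Set.range (terenzi f)) := by
    refine ⟨Bf, ?_⟩
    rintro y ⟨n, rfl⟩
    exact le_trans (t_le_sum f n) (hBf n)
  have hbdg : BddAbove (Set.range (terenzi g)) := by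
    refine ⟨Bg, ?_⟩
    rintro y ⟨n, rfl⟩
    exact le_trans (t_le_sum g n) (hBg n)
  have hbdd : BddAbove (Set.range (terenzi d)) := by
    refine ⟨Bf + Bg, ?_⟩
    rintro y ⟨n, rfl⟩
    exact le_trans (t_le_sum d n) (hBd n)
  have hlim : Tendsto (fun n => |terenzi d n - terenzi f n - terenzi g n|) atTop
      (𝓝 (|NT d - NT f - NT g|)) := by
    apply Tendsto.abs
    exact ((nt_tendsto hbdd).sub (nt_tendsto hbdf)).sub (nt_tendsto hbdg)
  apply le_of_tendsto hlim
  rw [eventually_atTop]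
  exact ⟨M, hfin⟩




/-- Rigidity of equality in the triangle inequality for the Terenzi norm. -/
lemma rigidity (f g : ℕ → ℝ) (Af Ag Ad : ℝ)
    (hf : Tendsto (terenzi f) atTop (𝓝 Af))
    (hg : Tendsto (terenzi g) atTop (𝓝 Ag))
    (hfg : Tendsto (terenzi (fun i => f i - g i)) atTop (𝓝 Ad))
    (hadd : Af + Ag = Ad)
    (hne : ∃ i, 1 ≤ i ∧ f i - g i ≠ 0) :
    (∀ i, 1 ≤ i → |f i - g i| = |f i| + |g i|) ∧
    (∀ n, terenzi f n + terenzi g n = terenzi (fun i => f i - g i) n) ∧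
    (∀ n : ℕ, max (|f (n+2)| / ((n:ℝ)+2)) (terenzi f (n+1))
       + max (|g (n+2)| / ((n:ℝ)+2)) (terenzi g (n+1))
       = max (|f (n+2) - g (n+2)| / ((n:ℝ)+2)) (terenzi (fun i => f i - g i) (n+1))) := by
  set d : ℕ → ℝ := fun i => f i - g i with hd
  have hd' : ∀ i, d i = f i - g i := fun _ => rfl
  set δ : ℕ → ℝ := fun n => terenzi f n + terenzi g n - terenzi d n with hδ
  have hδ' : ∀ n, δ n = terenzi f n + terenzi g n - terenzi d n := fun _ => rfl
  -- abbreviations for the max terms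
  set Mf : ℕ → ℝ := fun n => max (|f (n+2)| / ((n:ℝ)+2)) (terenzi f (n+1)) with hMf
  set Mg : ℕ → ℝ := fun n => max (|g (n+2)| / ((n:ℝ)+2)) (terenzi g (n+1)) with hMg
  set Md : ℕ → ℝ := fun n => max (|d (n+2)| / ((n:ℝ)+2)) (terenzi d (n+1)) with hMd
  set s : ℕ → ℝ := fun i => |f i| + |g i| - |d i| with hs
  have hs0 : ∀ i, 0 ≤ s i := by
    intro i
    have : |d i| ≤ |f i| + |g i| := by rw [hd' i]; exact abs_sub _ _
    simp only [hs]; linarith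
  -- exact recursion for the deficit
  have hrec : ∀ n : ℕ, δ (n+2) = (1 - 1/((n:ℝ)+3)) * (s (n+2) + δ (n+1))
      + (1/((n:ℝ)+3)) * (Mf n + Mg n - Md n) := by
    intro n
    simp only [hδ', hs, hMf, hMg, hMd]
    rw [terenzi_step f n, terenzi_step g n, terenzi_step d n, hd' (n+2)]
    ring
  -- the max-difference term is nonnegative (given nonneg deficit at previous index)
  have htnn : ∀ n : ℕ, 0 ≤ δ (n+1) → 0 ≤ Mf n + Mg n - Md n := by
    intro n hδn
    have h2 : (0:ℝ) < (n:ℝ)+2 := by positivity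
    have h1 : |d (n+2)| / ((n:ℝ)+2) ≤ Mf n + Mg n := by
      have e1 : |d (n+2)| ≤ |f (n+2)| + |g (n+2)| := by rw [hd' (n+2)]; exact abs_sub _ _
      have e2 : |d (n+2)| / ((n:ℝ)+2) ≤ |f (n+2)| / ((n:ℝ)+2) + |g (n+2)| / ((n:ℝ)+2) := by
        rw [← add_div]
        gcongr
      have e3 : |f (n+2)| / ((n:ℝ)+2) ≤ Mf n := le_max_left _ _
      have e4 : |g (n+2)| / ((n:ℝ)+2) ≤ Mg n := le_max_left _ _
      linarith
    have h3 : terenzi d (n+1) ≤ Mf n + Mg n := by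
      have e5 : terenzi d (n+1) ≤ terenzi f (n+1) + terenzi g (n+1) := by
        have := hδ' (n+1); linarith
      have e6 : terenzi f (n+1) ≤ Mf n := le_max_right _ _
      have e7 : terenzi g (n+1) ≤ Mg n := le_max_right _ _
      linarith
    have : Md n ≤ Mf n + Mg n := max_le h1 h3
    linarith
  -- nonnegativity of the deficit
  have hδ0 : ∀ n, 0 ≤ δ n := by
    intro n
    induction n using Nat.twoStepInduction with
    | zero => simp [hδ', terenzi]
    | one =>
      have := hs0 1
      simp only [hδ', terenzi]
      simp only [hs, hd' 1] at this
      linarith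
    | more n ih1 ih2 =>
      rw [hrec n]
      have h1 := htnn n ih2
      have hc := c_pos n
      have hc1 := c_lt_one n
      have h2 := hs0 (n+2)
      have e1 : 0 ≤ (1 - 1/((n:ℝ)+3)) * (s (n+2) + δ (n+1)) := by
        apply mul_nonneg (by linarith) (by linarith)
      have e2 : 0 ≤ (1/((n:ℝ)+3)) * (Mf n + Mg n - Md n) := by
        apply mul_nonneg (by linarith) h1
      linarith
  -- the combined quantity Φ is monotone
  set Φ : ℕ → ℝ := fun n => δ n * terenzi d n with hΦ
  have hΦ' : ∀ n, Φ n = δ n * terenzi d n := fun _ => rfl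
  have hΦ0 : ∀ n, 0 ≤ Φ n := fun n => mul_nonneg (hδ0 n) (t_nonneg d n)
  have hΦmono : Monotone Φ := by
    apply monotone_nat_of_le_succ
    intro n
    cases n with
    | zero =>
      rw [hΦ' 0, hδ' 0]
      simp [terenzi, hΦ0 1]
    | succ m =>
      have h2 : (0:ℝ) < (m:ℝ)+2 := by positivity
      have hc := c_pos m
      have hc1 := c_lt_one m
      have hδp := hδ0 (m+1)
      have hδp2 := hδ0 (m+2)
      have htd := t_nonneg d (m+1)
      have htd2 := t_nonneg d (m+2)
      rcases le_or_gt (|d (m+2)|) (((m:ℝ)+2) * terenzi d (m+1)) with hcase | hcase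
      · -- non-hump step : deficit does not decrease
        have hMdeq : Md m = terenzi d (m+1) := by
          rw [hMd]
          apply max_eq_right
          rw [div_le_iff₀ h2]
          linarith [hcase]
        have ht : δ (m+1) ≤ Mf m + Mg m - Md m := by
          rw [hMdeq]
          have e6 : terenzi f (m+1) ≤ Mf m := le_max_right _ _
          have e7 : terenzi g (m+1) ≤ Mg m := le_max_right _ _
          rw [hδ' (m+1)]
          linarith
        have hδle : δ (m+1) ≤ δ (m+2) := by
          rw [hrec m]
          have h4 := hs0 (m+2)
          have e1 : (1/((m:ℝ)+3)) * δ (m+1) ≤ (1/((m:ℝ)+3)) * (Mf m + Mg m - Md m) :=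
            mul_le_mul_of_nonneg_left ht (le_of_lt hc)
          have e2 : (1 - 1/((m:ℝ)+3)) * δ (m+1) ≤ (1 - 1/((m:ℝ)+3)) * (s (m+2) + δ (m+1)) :=
            mul_le_mul_of_nonneg_left (by linarith) (by linarith)
          have e3 : (1 - 1/((m:ℝ)+3)) * δ (m+1) + (1/((m:ℝ)+3)) * δ (m+1) = δ (m+1) := by ring
          linarith
        have hTdle : terenzi d (m+1) ≤ terenzi d (m+2) := t_mono d (by omega)
        rw [hΦ' (m+1), hΦ' (m+2)]
        apply mul_le_mul hδle hTdle htd hδp2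
      · -- hump step : the partial norm multiplies, the deficit shrinks slowly
        have hδge : (1 - 1/((m:ℝ)+3)) * δ (m+1) ≤ δ (m+2) := by
          rw [hrec m]
          have h4 := hs0 (m+2)
          have h5 := htnn m hδp
          have e2 : (1 - 1/((m:ℝ)+3)) * δ (m+1) ≤ (1 - 1/((m:ℝ)+3)) * (s (m+2) + δ (m+1)) :=
            mul_le_mul_of_nonneg_left (by linarith) (by linarith)
          have e1 : 0 ≤ (1/((m:ℝ)+3)) * (Mf m + Mg m - Md m) :=
            mul_nonneg (le_of_lt hc) h5
          linarith
        have hTdge : ((m:ℝ)+2) * terenzi d (m+1) ≤ terenzi d (m+2) := by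
          have h6 := t_step_lower d m
          have ec3 : 1 - 1/((m:ℝ)+3) = ((m:ℝ)+2)/((m:ℝ)+3) := by
            field_simp
            ring
          have e8 : ((m:ℝ)+2) * terenzi d (m+1) ≤ (1 - 1/((m:ℝ)+3)) * |d (m+2)|
              + terenzi d (m+1) := by
            rw [ec3, div_mul_eq_mul_div, ← sub_le_iff_le_add,
              le_div_iff₀ (by positivity : (0:ℝ) < (m:ℝ)+3)]
            nlinarith [mul_le_mul_of_nonneg_left (le_of_lt hcase)
              (by positivity : (0:ℝ) ≤ (m:ℝ)+2), htd]
          linarith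
        rw [hΦ' (m+1), hΦ' (m+2)]
        have e9 : δ (m+1) * terenzi d (m+1)
            ≤ ((1 - 1/((m:ℝ)+3)) * δ (m+1)) * (((m:ℝ)+2) * terenzi d (m+1)) := by
          have efact : ((1 - 1/((m:ℝ)+3)) * δ (m+1)) * (((m:ℝ)+2) * terenzi d (m+1))
              = (((m:ℝ)+2) * (1 - 1/((m:ℝ)+3))) * (δ (m+1) * terenzi d (m+1)) := by ring
          rw [efact]
          have e10 : (1:ℝ) ≤ ((m:ℝ)+2) * (1 - 1/((m:ℝ)+3)) := by
            have ec3 : 1 - 1/((m:ℝ)+3) = ((m:ℝ)+2)/((m:ℝ)+3) := by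
              field_simp
              ring
            rw [ec3, ← mul_div_assoc,
              le_div_iff₀ (by positivity : (0:ℝ) < (m:ℝ)+3)]
            nlinarith [Nat.cast_nonneg (α := ℝ) m]
          have e11 := mul_le_mul_of_nonneg_right e10 (mul_nonneg hδp htd)
          linarith [e11]
        apply le_trans e9
        apply mul_le_mul hδge hTdge (by positivity) hδp2
  -- Φ tends to zero, hence vanishes identically
  have hδlim : Tendsto δ atTop (𝓝 0) := by
    have : Tendsto δ atTop (𝓝 (Af + Ag - Ad)) := (hf.add hg).sub hfg
    rwa [hadd, sub_self] at this
  have hdbdd : BddAbove (Set.range (terenzi d)) := ⟨Ad, by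
    rintro y ⟨n, rfl⟩
    exact t_le_of_tendsto hfg n⟩
  have hdtends : Tendsto (terenzi d) atTop (𝓝 Ad) := hfg
  have hΦlim : Tendsto Φ atTop (𝓝 0) := by
    have h1 : Tendsto Φ atTop (𝓝 (0 * Ad)) := hδlim.mul hdtends
    rwa [zero_mul] at h1
  have hΦeq0 : ∀ n, Φ n = 0 := by
    intro n
    have h1 : Φ n ≤ 0 := Monotone.ge_of_tendsto hΦmono hΦlim n
    exact le_antisymm h1 (hΦ0 n)
  -- the first nonzero coordinate of d
  have hq := Nat.find_spec hne
  set q := Nat.find hne with hqdef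
  have hqmin : ∀ i, i < q → ¬ (1 ≤ i ∧ f i - g i ≠ 0) := fun i h => Nat.find_min hne h
  have hdq : d q ≠ 0 := by rw [hd' q]; exact hq.2
  have htdq : 0 < terenzi d q := t_pos d q hq.1 hdq
  -- δ vanishes from q on
  have hδq : ∀ n, q ≤ n → δ n = 0 := by
    intro n hn
    have h1 : 0 < terenzi d n := lt_of_lt_of_le htdq (t_mono d hn)
    have h2 := hΦeq0 n
    rw [hΦ' n] at h2
    rcases mul_eq_zero.mp h2 with h3 | h3
    · exact h3
    · linarith
  -- δ vanishes everywhere (descending induction below q)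
  have hdesc : ∀ m : ℕ, δ (m+1) = 0 → δ m = 0 := by
    intro m hm
    cases m with
    | zero => simp [hδ', terenzi]
    | succ k =>
      have hc := c_pos k
      have hc1 := c_lt_one k
      have h4 := hs0 (k+2)
      have h5 := htnn k (hδ0 (k+1))
      have h6 := hδ0 (k+1)
      have h7 := hrec k
      rw [hm] at h7
      have e2 : (1 - 1/((k:ℝ)+3)) * δ (k+1) ≤ (1 - 1/((k:ℝ)+3)) * (s (k+2) + δ (k+1)) :=
        mul_le_mul_of_nonneg_left (by linarith) (by linarith)
      have e1 : 0 ≤ (1/((k:ℝ)+3)) * (Mf k + Mg k - Md k) :=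
        mul_nonneg (le_of_lt hc) h5
      have e4 : (1 - 1/((k:ℝ)+3)) * δ (k+1) ≤ 0 := by linarith
      have e5 : 0 ≤ (1 - 1/((k:ℝ)+3)) * δ (k+1) :=
        mul_nonneg (by linarith) h6
      have e6 : (1 - 1/((k:ℝ)+3)) * δ (k+1) = 0 := le_antisymm e4 e5
      rcases mul_eq_zero.mp e6 with e7 | e7
      · linarith
      · exact e7
  have hδall : ∀ n, δ n = 0 := by
    have hdown : ∀ j, j ≤ q → δ (q - j) = 0 := by
      intro j
      induction j with
      | zero => intro _; simpa using hδq q le_rfl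
      | succ i ih =>
        intro hj
        have e1 : q - (i+1) + 1 = q - i := by omega
        apply hdesc
        rw [e1]
        exact ih (by omega)
    intro n
    rcases le_or_gt q n with h | h
    · exact hδq n h
    · have e2 : n = q - (q - n) := by omega
      rw [e2]
      exact hdown (q - n) (by omega)
  -- conclusions
  have hst : ∀ n : ℕ, s (n+2) = 0 ∧ Mf n + Mg n - Md n = 0 := by
    intro n
    have h7 := hrec n
    rw [hδall (n+2), hδall (n+1)] at h7
    have hc := c_pos n
    have hc1 := c_lt_one n
    have h4 := hs0 (n+2)
    have h5 := htnn n (le_of_eq (hδall (n+1)).symm)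
    have e2 : 0 ≤ (1 - 1/((n:ℝ)+3)) * s (n+2) := mul_nonneg (by linarith) h4
    have e1 : 0 ≤ (1/((n:ℝ)+3)) * (Mf n + Mg n - Md n) := mul_nonneg (le_of_lt hc) h5
    have e4 : (1 - 1/((n:ℝ)+3)) * (s (n+2) + 0) = (1 - 1/((n:ℝ)+3)) * s (n+2) := by ring
    rw [e4] at h7
    have e5 : (1 - 1/((n:ℝ)+3)) * s (n+2) = 0 := by linarith
    have e6 : (1/((n:ℝ)+3)) * (Mf n + Mg n - Md n) = 0 := by linarith
    constructor
    · rcases mul_eq_zero.mp e5 with e7 | e7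
      · exfalso; linarith
      · exact e7
    · rcases mul_eq_zero.mp e6 with e7 | e7
      · exfalso; linarith
      · exact e7
  refine ⟨?_, ?_, ?_⟩
  · intro i hi
    rcases Nat.exists_eq_add_of_le hi with ⟨j, rfl⟩
    cases j with
    | zero =>
      have h8 := hδall 1
      rw [hδ' 1] at h8
      simp only [terenzi] at h8
      have : |d 1| = |f 1| + |g 1| := by linarith
      rw [hd' 1] at this
      simpa using this
    | succ k =>
      have h9 := (hst k).1
      simp only [hs, hd'] at h9
      have e3 : 1 + (k+1) = k + 2 := by omega
      rw [e3]
      linarith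
  · intro n
    have := hδall n
    rw [hδ' n] at this
    linarith
  · intro n
    simp only [← hd' (n+2)]
    have h10 := (hst n).2
    have h11 : Mf n + Mg n = Md n := by linarith
    rw [hMf, hMg, hMd] at h11
    exact h11






lemma sign_opp {u v : ℝ} (h : |u - v| = |u| + |v|) : u * v ≤ 0 := by
  by_contra hpos
  push_neg at hpos
  have hlt : |u - v| < |u| + |v| := by
    rcases mul_pos_iff.mp hpos with ⟨hu, hv⟩ | ⟨hu, hv⟩
    · rw [abs_of_pos hu, abs_of_pos hv, abs_lt]
      constructor <;> linarith
    · rw [abs_of_neg hu, abs_of_neg hv, abs_lt]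
      constructor <;> linarith
  linarith


end TerenziAux

open TerenziAux

theorem terenzi_no_equilateral :
    ¬ ∃ (x : ℕ → ℕ → ℝ) (lam : ℝ), 0 < lam ∧
      (∀ m, Summable (fun n => |x m n|)) ∧
      (∀ m k, m ≠ k →
        Filter.Tendsto (terenzi (fun n => x m n - x k n)) Filter.atTop (nhds lam)) := by
  rintro ⟨x, lam, hlam, hsum, hten⟩
  classical
  -- modified sequences vanishing at coordinate 0
  set x' : ℕ → ℕ → ℝ := fun m i => if i = 0 then 0 else x m i with hx'
  have hx'' : ∀ m i, 1 ≤ i → x' m i = x m i := by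
    intro m i hi
    simp only [hx']
    rw [if_neg (by omega)]
  -- uniform bound on partial sums of differences with x' 0
  have hbound : ∀ m n, (∑ i ∈ Icc 1 n, |x' m i - x' 0 i|) ≤ 3/2 * lam := by
    intro m n
    rcases eq_or_ne m 0 with rfl | hm
    · have : (∑ i ∈ Icc 1 n, |x' 0 i - x' 0 i|) = 0 := by
        apply Finset.sum_eq_zero; intro i _; simp
      rw [this]; positivity
    · have ht := hten m 0 hm
      have h1 : terenzi (fun i => x' m i - x' 0 i) n = terenzi (fun i => x m i - x 0 i) n := by
        apply t_congr
        intro i hi _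
        rw [hx'' m i hi, hx'' 0 i hi]
      have h2 := sum_le_t (fun i => x' m i - x' 0 i) n
      have h3 : terenzi (fun i => x m i - x 0 i) n ≤ lam := t_le_of_tendsto ht n
      rw [h1] at h2
      linarith
  -- coordinatewise bounds
  set C : ℕ → ℝ := fun i => |x' 0 i| + 3/2 * lam with hC
  have hCmem : ∀ m i, x' m i ∈ Set.Icc (-(C i)) (C i) := by
    intro m i
    have h1 : |x' m i - x' 0 i| ≤ 3/2 * lam := by
      rcases Nat.eq_zero_or_pos i with rfl | hi
      · simp only [hx']
        simp
        positivity
      · have h2 : |x' m i - x' 0 i| ≤ ∑ j ∈ Icc 1 i, |x' m j - x' 0 j| := by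
          apply Finset.single_le_sum (f := fun j => |x' m j - x' 0 j|)
            (fun j _ => abs_nonneg _)
          rw [Finset.mem_Icc]; omega
        exact le_trans h2 (hbound m i)
    have h3 : |x' m i| ≤ C i := by
      rw [hC]
      calc |x' m i| = |(x' m i - x' 0 i) + x' 0 i| := by ring_nf
        _ ≤ |x' m i - x' 0 i| + |x' 0 i| := abs_add_le _ _
        _ ≤ |x' 0 i| + 3/2 * lam := by linarith
    rw [Set.mem_Icc]
    rw [abs_le] at h3
    exact h3
  -- extract a pointwise convergent subsequence
  have hcomp : IsCompact (Set.pi Set.univ fun i : ℕ => Set.Icc (-(C i)) (C i)) :=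
    isCompact_univ_pi (fun i => isCompact_Icc)
  have hmem : ∀ m, (fun i => x' m i) ∈ (Set.pi Set.univ fun i : ℕ => Set.Icc (-(C i)) (C i)) := by
    intro m
    rw [Set.mem_univ_pi]
    intro i
    exact hCmem m i
  obtain ⟨y, -, φ, hφ, hconv⟩ := hcomp.isSeqCompact hmem
  have hpt : ∀ i, Tendsto (fun j => x' (φ j) i) atTop (𝓝 (y i)) := by
    intro i
    exact (tendsto_pi_nhds.mp hconv) i
  -- the recentered sequence
  set z : ℕ → ℕ → ℝ := fun j i => x' (φ j) i - y i with hz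
  have hz' : ∀ j i, z j i = x' (φ j) i - y i := fun _ _ => rfl
  have h1 : ∀ i, Tendsto (fun j => z j i) atTop (𝓝 0) := by
    intro i
    have h4 := (hpt i).sub (tendsto_const_nhds (x := y i) (f := atTop (α := ℕ)))
    rwa [sub_self] at h4
  -- partial sums of |x' 0 - y| are bounded
  have hyb : ∀ n, (∑ i ∈ Icc 1 n, |x' 0 i - y i|) ≤ 3/2 * lam := by
    intro n
    have hlim : Tendsto (fun j => ∑ i ∈ Icc 1 n, |x' 0 i - x' (φ j) i|) atTop
        (𝓝 (∑ i ∈ Icc 1 n, |x' 0 i - y i|)) := by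
      apply tendsto_finset_sum
      intro i _
      exact ((tendsto_const_nhds.sub (hpt i))).abs
    apply le_of_tendsto hlim
    apply Eventually.of_forall
    intro j
    have : (∑ i ∈ Icc 1 n, |x' 0 i - x' (φ j) i|) = ∑ i ∈ Icc 1 n, |x' (φ j) i - x' 0 i| := by
      apply Finset.sum_congr rfl
      intro i _
      rw [abs_sub_comm]
    rw [this]
    exact hbound (φ j) n
  -- uniform bound on partial sums of |z j|
  have h2 : ∀ j n, (∑ i ∈ Icc 1 n, |z j i|) ≤ 3 * lam := by
    intro j n
    have hp : ∀ i, |z j i| ≤ |x' (φ j) i - x' 0 i| + |x' 0 i - y i| := by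
      intro i
      rw [hz' j i]
      calc |x' (φ j) i - y i| = |(x' (φ j) i - x' 0 i) + (x' 0 i - y i)| := by ring_nf
        _ ≤ _ := abs_add_le _ _
    calc (∑ i ∈ Icc 1 n, |z j i|)
        ≤ ∑ i ∈ Icc 1 n, (|x' (φ j) i - x' 0 i| + |x' 0 i - y i|) :=
          Finset.sum_le_sum (fun i _ => hp i)
      _ = (∑ i ∈ Icc 1 n, |x' (φ j) i - x' 0 i|) + ∑ i ∈ Icc 1 n, |x' 0 i - y i| :=
          Finset.sum_add_distrib
      _ ≤ 3/2 * lam + 3/2 * lam := add_le_add (hbound (φ j) n) (hyb n)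
      _ = 3 * lam := by ring
  -- differences of z agree with differences of x
  have h3 : ∀ j k, j ≠ k → Tendsto (terenzi (fun i => z j i - z k i)) atTop (𝓝 lam) := by
    intro j k hjk
    have he : terenzi (fun i => z j i - z k i) = terenzi (fun i => x (φ j) i - x (φ k) i) := by
      funext n
      apply t_congr
      intro i hi _
      rw [hz' j i, hz' k i, hx'' (φ j) i hi, hx'' (φ k) i hi]
      ring
    rw [he]
    exact hten (φ j) (φ k) (fun h => hjk (hφ.injective h))
  -- bounded ranges of the partial norms
  have hbz : ∀ j, BddAbove (Set.range (terenzi (z j))) := by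
    intro j
    refine ⟨3 * lam, ?_⟩
    rintro w ⟨n, rfl⟩
    exact le_trans (t_le_sum (z j) n) (h2 j n)
  -- partial sums and their suprema
  set P : ℕ → ℕ → ℝ := fun j n => ∑ i ∈ Icc 1 n, |z j i| with hP
  have hP' : ∀ j n, P j n = ∑ i ∈ Icc 1 n, |z j i| := fun _ _ => rfl
  have hPmono : ∀ j, Monotone (P j) := by
    intro j a b hab
    apply Finset.sum_le_sum_of_subset_of_nonneg
    · exact Finset.Icc_subset_Icc_right hab
    · exact fun i _ _ => abs_nonneg _
  have hPbdd : ∀ j, BddAbove (Set.range (P j)) := by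
    intro j
    refine ⟨3 * lam, ?_⟩
    rintro w ⟨n, rfl⟩
    exact h2 j n
  have hPlim : ∀ j, Tendsto (P j) atTop (𝓝 (⨆ n, P j n)) :=
    fun j => tendsto_atTop_ciSup (hPmono j) (hPbdd j)
  have hPle : ∀ j n, P j n ≤ ⨆ n, P j n := fun j n => le_ciSup (hPbdd j) n
  -- prefix sums tend to 0 in the sequence index
  have hpre0 : ∀ M : ℕ, Tendsto (fun k => P k M) atTop (𝓝 0) := by
    intro M
    have h5 : Tendsto (fun k => ∑ i ∈ Icc 1 M, |z k i|) atTop (𝓝 (∑ _i ∈ Icc 1 M, (0:ℝ))) := by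
      apply tendsto_finset_sum
      intro i _
      have h6 := (h1 i).abs
      rwa [abs_zero] at h6
    rw [Finset.sum_const, smul_zero] at h5
    exact h5
  -- Claim A : asymptotic additivity of the norm
  have hA : ∀ j, Tendsto (fun k => NT (z k)) atTop (𝓝 (lam - NT (z j))) := by
    intro j
    rw [Metric.tendsto_atTop]
    intro ε hε
    obtain ⟨M1, hM1⟩ := (Metric.tendsto_atTop.mp (hPlim j)) (ε/8) (by linarith)
    obtain ⟨M2, hM2⟩ := exists_nat_gt (96 * lam / ε)
    set M := max (max M1 M2) 1 with hM
    have hM1' : M1 ≤ M := le_trans (le_max_left _ _) (le_max_left _ _)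
    have hM2' : M2 ≤ M := le_trans (le_max_right _ _) (le_max_left _ _)
    have hMge1 : 1 ≤ M := le_max_right _ _
    set τ : ℝ := (⨆ n, P j n) - P j M with hτ
    have hτ0 : τ < ε/8 := by
      have h7 := hM1 M hM1'
      rw [Real.dist_eq, abs_sub_lt_iff] at h7
      have h5 := hPle j M
      rw [hτ]
      linarith [h7.2]
    have hτnn : 0 ≤ τ := by
      have := hPle j M
      rw [hτ]; linarith
    have htail : ∀ n, M ≤ n → (∑ i ∈ Ioc M n, |z j i|) ≤ τ := by
      intro n hn
      have hsplit : (∑ i ∈ Ioc 0 M, |z j i|) + (∑ i ∈ Ioc M n, |z j i|)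
          = ∑ i ∈ Ioc 0 n, |z j i| :=
        Finset.sum_Ioc_consecutive _ (Nat.zero_le M) hn
      have e0 : ∀ m : ℕ, (∑ i ∈ Ioc 0 m, |z j i|) = P j m := by
        intro m
        rw [hP' j m, ← Finset.Icc_add_one_left_eq_Ioc, zero_add]
      rw [e0, e0] at hsplit
      have h5 := hPle j n
      rw [hτ]
      linarith
    have herr : (1/(((M:ℝ)+1)*((M:ℝ)+2))) * (2*(3*lam + 3*lam)) < ε/4 := by
      have hMr : (96 * lam / ε) < (M:ℝ) := lt_of_lt_of_le hM2 (Nat.cast_le.mpr hM2')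
      have hMr1 : (1:ℝ) ≤ (M:ℝ) := by exact_mod_cast hMge1
      have hMp : (0:ℝ) < ((M:ℝ)+1)*((M:ℝ)+2) := by positivity
      rw [div_mul_eq_mul_div, one_mul, div_lt_iff₀ hMp]
      have e1 : 96 * lam < ε * (M:ℝ) := by
        rw [div_lt_iff₀ hε] at hMr
        linarith [hMr]
      nlinarith [hMr1, hε.le, mul_pos hε (by linarith : (0:ℝ) < (M:ℝ))]
    obtain ⟨K1, hK1⟩ := (Metric.tendsto_atTop.mp (hpre0 M)) (ε/16) (by linarith)
    refine ⟨max K1 (j+1), ?_⟩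
    intro k hk
    have hkj : k ≠ j := by
      have := le_trans (le_max_right K1 (j+1)) hk
      omega
    have hkey := key_est (z j) (z k) (3*lam) (3*lam) τ M hMge1 (h2 j) (h2 k) htail
    have hNTd : NT (fun i => z j i - z k i) = lam := nt_eq_of_tendsto (h3 j k (fun h => hkj h.symm))
    rw [hNTd] at hkey
    have hpk : (∑ i ∈ Icc 1 M, |z k i|) < ε/16 := by
      have h8 := hK1 k (le_trans (le_max_left _ _) hk)
      rw [Real.dist_eq, sub_zero] at h8
      have h9 : |P k M| = P k M := abs_of_nonneg (Finset.sum_nonneg (fun i _ => abs_nonneg _))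
      rw [h9] at h8
      exact h8
    rw [Real.dist_eq]
    have e2 : NT (z k) - (lam - NT (z j)) = -(lam - NT (z j) - NT (z k)) := by ring
    rw [e2, abs_neg]
    calc |lam - NT (z j) - NT (z k)|
        ≤ 2 * (∑ i ∈ Icc 1 M, |z k i|) + 2 * τ
            + (1/(((M:ℝ)+1)*((M:ℝ)+2))) * (2*(3*lam + 3*lam)) := hkey
      _ < 2 * (ε/16) + 2 * (ε/8) + ε/4 := by
          apply add_lt_add (add_lt_add _ _) herr
          · linarith [hpk]
          · linarith [hτ0]
      _ < ε := by linarith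
  -- all the limiting norms are lam/2
  have hNTeq : ∀ j, NT (z j) = NT (z 0) := by
    intro j
    have h4 := tendsto_nhds_unique (hA j) (hA 0)
    linarith
  have hNThalf : ∀ j, NT (z j) = lam / 2 := by
    have hconst : Tendsto (fun k => NT (z k)) atTop (𝓝 (NT (z 0))) := by
      have he : (fun k => NT (z k)) = fun _ => NT (z 0) := funext (fun k => hNTeq k)
      rw [he]; exact tendsto_const_nhds
    have h6 := tendsto_nhds_unique hconst (hA 0)
    intro j
    rw [hNTeq j]; linarith
  have hTz : ∀ j, Tendsto (terenzi (z j)) atTop (𝓝 (lam/2)) := by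
    intro j
    have h4 := nt_tendsto (hbz j)
    rwa [hNThalf j] at h4
  -- each z j has a nonzero coordinate
  have hex : ∀ j : ℕ, ∃ i, 1 ≤ i ∧ z j i ≠ 0 := by
    intro j
    by_contra hno
    push_neg at hno
    have hzero : ∀ n, terenzi (z j) n = 0 :=
      fun n => t_zero_prefix (z j) n (fun i hi _ => hno i hi)
    have hz0' : Tendsto (terenzi (z j)) atTop (𝓝 0) := by
      have he : terenzi (z j) = fun _ => 0 := funext hzero
      rw [he]; exact tendsto_const_nhds
    have := tendsto_nhds_unique (hTz j) hz0'
    linarith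
  -- rigidity for every pair
  have hrig : ∀ a b : ℕ, a ≠ b →
      (∀ i, 1 ≤ i → |z a i - z b i| = |z a i| + |z b i|) ∧
      (∀ n, terenzi (z a) n + terenzi (z b) n = terenzi (fun i => z a i - z b i) n) ∧
      (∀ n : ℕ, max (|z a (n+2)| / ((n:ℝ)+2)) (terenzi (z a) (n+1))
         + max (|z b (n+2)| / ((n:ℝ)+2)) (terenzi (z b) (n+1))
         = max (|z a (n+2) - z b (n+2)| / ((n:ℝ)+2)) (terenzi (fun i => z a i - z b i) (n+1))) := by
    intro a b hab
    apply rigidity (z a) (z b) (lam/2) (lam/2) lam (hTz a) (hTz b) (h3 a b hab) (by ring)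
    by_contra hno
    push_neg at hno
    have hzero : ∀ n, terenzi (fun i => z a i - z b i) n = 0 :=
      fun n => t_zero_prefix _ n (fun i hi _ => hno i hi)
    have hz0' : Tendsto (terenzi (fun i => z a i - z b i)) atTop (𝓝 0) := by
      have he : terenzi (fun i => z a i - z b i) = fun _ => 0 := funext hzero
      rw [he]; exact tendsto_const_nhds
    have := tendsto_nhds_unique (h3 a b hab) hz0'
    linarith
  -- first nonzero coordinates
  set p : ℕ → ℕ := fun j => Nat.find (hex j) with hp
  have hp1 : ∀ j, 1 ≤ p j ∧ z j (p j) ≠ 0 := fun j => Nat.find_spec (hex j)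
  have hpzero : ∀ j i, 1 ≤ i → i < p j → z j i = 0 := by
    intro j i hi1 hi2
    by_contra hne'
    exact Nat.find_min (hex j) hi2 ⟨hi1, hne'⟩
  set q := max (max (p 0) (p 1)) (p 2) with hq
  have hq1 : 1 ≤ q := le_trans (hp1 0).1 (le_trans (le_max_left _ _) (le_max_left _ _))
  have hple : ∀ a, a < 3 → p a ≤ q := by
    intro a ha
    interval_cases a
    · exact le_trans (le_max_left _ _) (le_max_left _ _)
    · exact le_trans (le_max_right _ _) (le_max_left _ _)
    · exact le_max_right _ _
  obtain ⟨c, hc3, hcq⟩ : ∃ c, c < 3 ∧ p c = q := by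
    rcases max_cases (max (p 0) (p 1)) (p 2) with ⟨h4, -⟩ | ⟨h4, -⟩
    · rcases max_cases (p 0) (p 1) with ⟨h5, -⟩ | ⟨h5, -⟩
      · exact ⟨0, by omega, by rw [hq, h4, h5]⟩
      · exact ⟨1, by omega, by rw [hq, h4, h5]⟩
    · exact ⟨2, by omega, by rw [hq, h4]⟩
  -- every one of the three vectors is nonzero at coordinate q
  have hforce : ∀ a, a < 3 → z a q ≠ 0 := by
    intro a ha
    rcases eq_or_ne (p a) q with hpa | hpa
    · rw [← hpa]; exact (hp1 a).2
    · have hpaq : p a < q := lt_of_le_of_ne (hple a ha) hpa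
      have hac : a ≠ c := by
        intro h4
        rw [h4, hcq] at hpa
        exact hpa rfl
      have hq2 : 2 ≤ q := by
        have := (hp1 a).1
        omega
      have hzb0 : ∀ i, 1 ≤ i → i ≤ q - 1 → z c i = 0 := by
        intro i hi1 hi2
        apply hpzero c i hi1
        omega
      obtain ⟨R1, R2, R3⟩ := hrig a c hac
      set n := q - 2 with hn
      have hn2 : n + 2 = q := by omega
      have hn1 : n + 1 = q - 1 := by omega
      have hcast : ((n:ℕ):ℝ) + 2 = (q:ℝ) := by
        rw [hn, Nat.cast_sub hq2]
        push_cast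
        ring
      have hTb0 : terenzi (z c) (n+1) = 0 := by
        rw [hn1]; exact t_zero_prefix (z c) (q-1) hzb0
      have hTa : 0 < terenzi (z a) (n+1) := by
        rw [hn1]
        have h7 : 0 < terenzi (z a) (p a) := t_pos (z a) (p a) (hp1 a).1 (hp1 a).2
        exact lt_of_lt_of_le h7 (t_mono (z a) (by omega))
      intro hza0
      have hzcq : z c q ≠ 0 := by rw [← hcq]; exact (hp1 c).2
      have hβ : 0 < |z c q| / (q:ℝ) := by
        have h8 : 0 < |z c q| := abs_pos.mpr hzcq
        have h9 : (0:ℝ) < (q:ℝ) := by exact_mod_cast hq1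
        positivity
      have hmax := R3 n
      rw [hn2, hcast, hTb0] at hmax
      have hTd : terenzi (fun i => z a i - z c i) (n+1) = terenzi (z a) (n+1) := by
        have h10 := R2 (n+1)
        rw [hTb0] at h10
        linarith
      rw [hTd, hza0] at hmax
      rw [abs_zero, zero_div, zero_sub, abs_neg] at hmax
      rw [max_eq_right (le_of_lt hTa), max_eq_left (le_of_lt hβ)] at hmax
      have hcontr : max (|z c q| / (q:ℝ)) (terenzi (z a) (n+1))
          < terenzi (z a) (n+1) + |z c q| / (q:ℝ) := by
        apply max_lt <;> linarith
      linarith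
  -- sign conditions and the pigeonhole
  have hsign : ∀ a b : ℕ, a ≠ b → z a q * z b q ≤ 0 := by
    intro a b hab
    exact sign_opp ((hrig a b hab).1 q hq1)
  have h01 := hsign 0 1 (by omega)
  have h02 := hsign 0 2 (by omega)
  have h12 := hsign 1 2 (by omega)
  have hz0 := hforce 0 (by omega)
  have hz1 := hforce 1 (by omega)
  have hz2 := hforce 2 (by omega)
  rcases lt_or_gt_of_ne hz0 with h | h
  · have hb : 0 < z 1 q := by
      rcases lt_or_gt_of_ne hz1 with h' | h'
      · exfalso; nlinarith
      · exact h'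
    have hc' : 0 < z 2 q := by
      rcases lt_or_gt_of_ne hz2 with h' | h'
      · exfalso; nlinarith
      · exact h'
    nlinarith
  · have hb : z 1 q < 0 := by
      rcases lt_or_gt_of_ne hz1 with h' | h'
      · exact h'
      · exfalso; nlinarith
    have hc' : z 2 q < 0 := by
      rcases lt_or_gt_of_ne hz2 with h' | h'
      · exact h'
      · exfalso; nlinarith
    nlinarith
end
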